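/- arXiv:1812.08447 — 7 statements merged into one kernel-verified Lean document; each statement's English description precedes it below -/
import Mathlib

section
/- Every finite abstract simplicial complex K of dimension d has a geometric realization in ℝ^{2d+1}: there is an injective map f from the vertex set of K into ℝ^{2d+1} such that for every simplex F ∈ K the points {f(v) : v ∈ F} are affinely independent, and for all simplices F, G ∈ K the intersection conv(f(F)) ∩ conv(f(G)) equals conv(f(F ∩ G)). -/
/-!
Place the vertices on the moment curve `t ↦ (t, t², …, t^(2d+1))` at distinct parameters. Any
`2d+2` points of this curve are affinely independent, since an affine dependence among them
would be a vanishing combination of the rows of an invertible Vandermonde matrix. Two simplices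
of `K` together have at most `2d+2` vertices, and simplices whose joint vertex set is affinely
independent meet exactly in the convex hull of their common vertices.
-/

open Finset Function

section MomentCurve

variable {R : Type*} [CommRing R]

def momentCurve (n : ℕ) (t : R) : Fin n → R := fun i => t ^ ((i : ℕ) + 1)

lemma momentCurve_injective {n : ℕ} (hn : n ≠ 0) : Injective (momentCurve (R := R) n) :=
  fun s t hst => by simpa [momentCurve] using congrFun hst ⟨0, Nat.pos_of_ne_zero hn⟩

lemma eq_zero_of_forall_sum_mul_pow_eq_zero [IsDomain R] {ι : Type*} [Fintype ι] {n : ℕ} {t w : ι → R}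
    (ht : Injective t) (hcard : Fintype.card ι ≤ n + 1)
    (hw : ∀ k ≤ n, ∑ i, w i * t i ^ k = 0) : w = 0 := by
  set e := (Fintype.equivFin ι).symm
  have hwe : w ∘ e = 0 := by
    refine Matrix.eq_zero_of_forall_pow_sum_mul_pow_eq_zero (ht.comp e.injective) fun k => ?_
    exact (Equiv.sum_comp e fun i => w i * t i ^ (k : ℕ)).trans (hw k (by omega))
  funext i
  simpa using congrFun hwe (e.symm i)

lemma affineIndependent_momentCurve [IsDomain R] {ι : Type*} [Fintype ι] {n : ℕ} {t : ι → R}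
    (ht : Injective t) (hcard : Fintype.card ι ≤ n + 1) :
    AffineIndependent R (momentCurve n ∘ t) := by
  classical
  rw [affineIndependent_iff]
  intro s w hw₀ hw₁
  set W : ι → R := fun i => if i ∈ s then w i else 0
  have hsum (k : ℕ) : ∑ i, W i * t i ^ k = ∑ i ∈ s, w i * t i ^ k := by
    simp only [W, ite_mul, zero_mul, sum_ite_mem, univ_inter]
  have hW : W = 0 := by
    refine eq_zero_of_forall_sum_mul_pow_eq_zero ht hcard fun k hk => ?_
    rw [hsum]
    rcases k with _ | j
    · simpa using hw₀
    · simpa [momentCurve] using congrFun hw₁ ⟨j, by omega⟩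
  intro i hi
  simpa [W, hi] using congrFun hW i

end MomentCurve

lemma convexHull_image_inter_of_affineIndependent {𝕜 E V : Type*} [Field 𝕜] [LinearOrder 𝕜]
    [IsStrictOrderedRing 𝕜] [AddCommGroup E] [Module 𝕜 E] [DecidableEq V] {f : V → E}
    (hf : Injective f) {F G : Finset V}
    (hFG : AffineIndependent 𝕜 fun v : (F ∪ G : Finset V) => f v) :
    convexHull 𝕜 (f '' F) ∩ convexHull 𝕜 (f '' G) = convexHull 𝕜 (f '' (F ∩ G : Finset V)) := by
  classical
  have hs : AffineIndependent 𝕜 ((↑) : ((F ∪ G).image f : Finset E) → E) := by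
    refine hFG.range.mono fun x hx => ?_
    obtain ⟨v, hv, rfl⟩ := mem_image.1 hx
    exact ⟨⟨v, hv⟩, rfl⟩
  rw [coe_inter, Set.image_inter hf, ← coe_image, ← coe_image,
    hs.convexHull_inter (image_subset_image subset_union_left)
      (image_subset_image subset_union_right)]

theorem stmt_1_general (V : Type) [Fintype V] [DecidableEq V] (d : ℕ) (K : Finset (Finset V))
    (hdim : ∀ F ∈ K, F.card ≤ d + 1) :
    ∃ f : V → (Fin (2 * d + 1) → ℝ),
      Function.Injective f ∧
      (∀ F ∈ K, AffineIndependent ℝ (fun v : F => f v.1)) ∧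
      (∀ F ∈ K, ∀ G ∈ K,
        convexHull ℝ (f '' (F : Set V)) ∩ convexHull ℝ (f '' (G : Set V)) =
          convexHull ℝ (f '' ((F ∩ G : Finset V) : Set V))) := by
  set t : V → ℝ := fun v => (Fintype.equivFin V v : ℕ)
  have ht : Injective t :=
    Nat.cast_injective.comp (Fin.val_injective.comp (Fintype.equivFin V).injective)
  have hindep (s : Finset V) (hs : s.card ≤ 2 * d + 2) :
      AffineIndependent ℝ fun v : s => momentCurve (2 * d + 1) (t v) :=
    affineIndependent_momentCurve (ht.comp Subtype.val_injective) (by simpa using hs)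
  have hf : Injective (momentCurve (2 * d + 1) ∘ t) := (momentCurve_injective (by omega)).comp ht
  refine ⟨momentCurve (2 * d + 1) ∘ t, hf, fun F hF => hindep F (by grind), ?_⟩
  intro F hF G hG
  refine convexHull_image_inter_of_affineIndependent hf (hindep _ ?_)
  grind [card_union_le]

/-- Every finite abstract simplicial complex of dimension d has a geometric
realization in ℝ^{2d+1}. -/
theorem stmt_1 (V : Type) [Fintype V] [DecidableEq V] (d : ℕ) (K : Finset (Finset V))
    (hne : K.Nonempty)
    (hdown : ∀ F ∈ K, ∀ G ⊆ F, G ∈ K)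
    (hdim : ∀ F ∈ K, F.card ≤ d + 1)
    (hdim' : ∃ F ∈ K, F.card = d + 1) :
    ∃ f : V → (Fin (2 * d + 1) → ℝ),
      Function.Injective f ∧
      (∀ F ∈ K, AffineIndependent ℝ (fun v : F => f v.1)) ∧
      (∀ F ∈ K, ∀ G ∈ K,
        convexHull ℝ (f '' (F : Set V)) ∩ convexHull ℝ (f '' (G : Set V)) =
          convexHull ℝ (f '' ((F ∩ G : Finset V) : Set V))) :=
  stmt_1_general V d K hdim
end

section
/- For all integers d, r with 1 ≤ d ≤ r ≤ 2d there is a constant c > 0 such that for every n ≥ r+1 there exists a simplicial complex K of dimension d on n vertices that admits a linear embedding into ℝ^r and satisfies f_d(K) ≥ c · n^{⌈r/2⌉}. -/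
/-!
Write `r + 1 = 2q + ε` with `ε ∈ {0, 1}` and `a = d + q - r`, so that `d + 1 = q + ε + a`. Deal the
vertices into `q` blocks of about `n / q` vertices (plus an apex when `ε = 1`) and take the join of
paths on `a` of the blocks with the discrete vertex sets of the others. Placing every block on a
line in its own coordinate plane, a point of the realization determines the total weight and first
moment of each block; on at most two consecutive vertices of a line these pin down the barycentric
coordinates, which gives the intersection property, and Radon's theorem upgrades it to affine
independence. Picking an edge or a vertex in every block yields about `(n / q) ^ q` facets.
-/

open Finset

section ConvexHull

variable {𝕜 V E : Type*} [Field 𝕜] [LinearOrder 𝕜] [IsStrictOrderedRing 𝕜]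
  [AddCommGroup E] [Module 𝕜 E] {f : V → E}

lemma mem_convexHull_image_finset_iff {F : Finset V} {x : E} :
    x ∈ convexHull 𝕜 (f '' F) ↔
      ∃ w : V → 𝕜, (∀ v ∈ F, 0 ≤ w v) ∧ ∑ v ∈ F, w v = 1 ∧ ∑ v ∈ F, w v • f v = x := by
  classical
  constructor
  · refine fun hx => (convexHull_min (t := {y | ∃ w : V → 𝕜, (∀ v ∈ F, 0 ≤ w v) ∧
      ∑ v ∈ F, w v = 1 ∧ ∑ v ∈ F, w v • f v = y}) ?_ ?_) hx
    · rintro _ ⟨v, hv, rfl⟩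
      exact ⟨fun u => if u = v then 1 else 0, fun u _ => by dsimp only; positivity,
        by simp [mem_coe.1 hv], by simp [mem_coe.1 hv]⟩
    · rintro _ ⟨w, hw₀, hw₁, rfl⟩ _ ⟨z, hz₀, hz₁, rfl⟩ s t hs ht hst
      refine ⟨s • w + t • z, fun v hv => ?_, ?_, ?_⟩
      · simp only [Pi.add_apply, Pi.smul_apply, smul_eq_mul]
        exact add_nonneg (mul_nonneg hs (hw₀ v hv)) (mul_nonneg ht (hz₀ v hv))
      · simp [sum_add_distrib, ← mul_sum, hw₁, hz₁, hst]
      · simp [add_smul, sum_add_distrib, smul_sum, mul_smul]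
  · rintro ⟨w, hw₀, hw₁, rfl⟩
    rw [← centerMass_eq_of_sum_1 _ _ hw₁]
    exact F.centerMass_mem_convexHull hw₀ (by rw [hw₁]; exact one_pos)
      fun v hv => Set.mem_image_of_mem f hv

lemma convexHull_image_inter_eq [DecidableEq V] {F G : Finset V}
    (h : ∀ w z : V → 𝕜, (∀ v ∈ F, 0 ≤ w v) → (∀ v ∈ G, 0 ≤ z v) →
      ∑ v ∈ F, w v = 1 → ∑ v ∈ G, z v = 1 → ∑ v ∈ F, w v • f v = ∑ v ∈ G, z v • f v →
      ∀ v ∈ F, v ∉ G → w v = 0) :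
    convexHull 𝕜 (f '' F) ∩ convexHull 𝕜 (f '' G) = convexHull 𝕜 (f '' ↑(F ∩ G)) := by
  refine subset_antisymm ?_ (Set.subset_inter ?_ ?_)
  · rintro x ⟨hxF, hxG⟩
    obtain ⟨w, hw₀, hw₁, rfl⟩ := mem_convexHull_image_finset_iff.1 hxF
    obtain ⟨z, hz₀, hz₁, hwz⟩ := mem_convexHull_image_finset_iff.1 hxG
    have hw : ∀ v ∈ F, v ∉ F ∩ G → w v = 0 := fun v hvF hv =>
      h w z hw₀ hz₀ hw₁ hz₁ hwz.symm v hvF fun hvG => hv (mem_inter.2 ⟨hvF, hvG⟩)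
    refine mem_convexHull_image_finset_iff.2 ⟨w, fun v hv => hw₀ v (mem_inter.1 hv).1, ?_, ?_⟩
    · rwa [sum_subset inter_subset_left hw]
    · exact sum_subset inter_subset_left fun v hv hv' => by rw [hw v hv hv', zero_smul]
  all_goals exact convexHull_mono (Set.image_mono (by simp))

/-- Radon's theorem: an affinely dependent family splits into two parts with meeting hulls. -/
lemma affineIndependent_of_convexHull_image_inter_eq [DecidableEq V] {F : Finset V}
    (h : ∀ G ⊆ F, ∀ H ⊆ F,
      convexHull 𝕜 (f '' G) ∩ convexHull 𝕜 (f '' H) = convexHull 𝕜 (f '' ↑(G ∩ H))) :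
    AffineIndependent 𝕜 (fun v : F => f v) := by
  by_contra hdep
  obtain ⟨I, hI⟩ := Convex.radon_partition hdep
  classical
  let lift : Set F → Finset V := fun J => J.toFinset.map (Function.Embedding.subtype (· ∈ F))
  have hlift : ∀ J, (fun v : F => f v) '' J = f '' ↑(lift J) := fun J => by
    simp [lift, Set.image_image]
  have hsub : ∀ J, lift J ⊆ F := fun J v hv => by
    obtain ⟨u, -, rfl⟩ := mem_map.1 hv
    exact u.2
  have hdisj : lift I ∩ lift Iᶜ = ∅ := by
    ext v
    simp only [lift, mem_inter, mem_map, Set.mem_toFinset, Set.mem_compl_iff, notMem_empty,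
      iff_false]
    rintro ⟨⟨u, hu, rfl⟩, ⟨u', hu', hu'u⟩⟩
    exact hu' (Subtype.ext hu'u ▸ hu)
  rw [hlift, hlift, h _ (hsub I) _ (hsub Iᶜ), hdisj] at hI
  simp at hI

end ConvexHull

section Moments

variable {𝕜 V : Type*} [Field 𝕜] [LinearOrder 𝕜] [IsStrictOrderedRing 𝕜]
  {A C : Finset V} {w z : V → 𝕜} {v : V}

lemma eq_zero_of_mass_moment_eq_of_gap {p : V → 𝕜} (hv : v ∈ A) (hw : ∀ x ∈ A, 0 ≤ w x)
    (hz : ∀ x ∈ C, 0 ≤ z x) (hmass : ∑ x ∈ A, w x = ∑ x ∈ C, z x)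
    (hmom : ∑ x ∈ A, w x * p x = ∑ x ∈ C, z x * p x)
    (hA : ∀ x ∈ A, p x ≤ p v + 1) (hC : ∀ x ∈ C, p v + 1 ≤ p x) : w v = 0 := by
  classical
  have hCmom : (∑ x ∈ C, z x) * (p v + 1) ≤ ∑ x ∈ C, z x * p x := by
    rw [sum_mul]
    exact sum_le_sum fun x hx => mul_le_mul_of_nonneg_left (hC x hx) (hz x hx)
  have hAmom : ∑ x ∈ A.erase v, w x * p x ≤ (∑ x ∈ A.erase v, w x) * (p v + 1) := by
    rw [sum_mul]
    exact sum_le_sum fun x hx =>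
      mul_le_mul_of_nonneg_left (hA x (mem_of_mem_erase hx)) (hw x (mem_of_mem_erase hx))
  rw [← hmass, ← add_sum_erase A _ hv] at hCmom
  rw [← add_sum_erase A _ hv] at hmom
  linarith [hw v hv]

lemma eq_zero_of_mass_moment_eq_of_consecutive {p : V → ℕ} (hv : v ∈ A)
    (hw : ∀ x ∈ A, 0 ≤ w x) (hz : ∀ x ∈ C, 0 ≤ z x) (hmass : ∑ x ∈ A, w x = ∑ x ∈ C, z x)
    (hmom : ∑ x ∈ A, w x * p x = ∑ x ∈ C, z x * p x)
    (hA : ∀ x ∈ A, p x ≤ p v + 1 ∧ p v ≤ p x + 1) (hC : ∀ x ∈ C, ∀ y ∈ C, p x ≤ p y + 1)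
    (hvC : ∀ x ∈ C, p x ≠ p v) : w v = 0 := by
  by_cases hright : ∀ x ∈ C, p v < p x
  · refine eq_zero_of_mass_moment_eq_of_gap (p := fun x => (p x : 𝕜)) hv hw hz hmass hmom
      (fun x hx => by exact_mod_cast (hA x hx).1) fun x hx => by exact_mod_cast hright x hx
  · push Not at hright
    obtain ⟨c, hc, hcv⟩ := hright
    have hleft : ∀ x ∈ C, p x + 1 ≤ p v := fun x hx => by
      have := hC x hx c hc
      have := hvC x hx
      have := hvC c hc
      omega
    refine eq_zero_of_mass_moment_eq_of_gap (p := fun x => -(p x : 𝕜)) hv hw hz hmass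
      (by simpa only [mul_neg, sum_neg_distrib, neg_inj] using hmom) (fun x hx => ?_) fun x hx => ?_
    · have : (p v : 𝕜) ≤ p x + 1 := by exact_mod_cast (hA x hx).2
      linarith
    · have : (p x : 𝕜) + 1 ≤ p v := by exact_mod_cast hleft x hx
      linarith

end Moments

lemma sum_range_ite_lt {a m : ℕ} (h : a ≤ m) :
    ∑ j ∈ range m, (if j < a then 2 else 1) = m + a := by
  obtain ⟨k, rfl⟩ := Nat.exists_eq_add_of_le h
  rw [sum_range_add, sum_congr rfl fun j hj => if_pos (mem_range.1 hj)]
  simp only [sum_const, card_range, smul_eq_mul, add_lt_iff_neg_left, not_lt_zero, if_false]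
  omega

/-- `q` blocks, of which the first `a` carry paths, and `ε ∈ {0, 1}` apexes. -/
structure BlockLayout where
  q : ℕ
  ε : ℕ
  a : ℕ
  q_pos : 0 < q
  ε_le_one : ε ≤ 1
  a_le_q : a ≤ q

namespace BlockLayout

variable (B : BlockLayout) {n : ℕ}

def block (v : ℕ) : ℕ := if v < B.ε then B.q else (v - B.ε) % B.q

def pos (v : ℕ) : ℕ := (v - B.ε) / B.q

variable {B}

lemma block_lt_q_iff {v : ℕ} : B.block v < B.q ↔ B.ε ≤ v := by
  unfold block
  split_ifs with h
  · omega
  · exact iff_of_true (Nat.mod_lt _ B.q_pos) (by omega)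

lemma block_lt (v : ℕ) : B.block v < B.q + B.ε := by
  by_cases h : v < B.ε
  · simp only [block, if_pos h]; omega
  · have := block_lt_q_iff.2 (not_lt.1 h); omega

lemma pos_eq_zero_of_lt {v : ℕ} (h : v < B.ε) : B.pos v = 0 := by
  simp [pos, Nat.sub_eq_zero_of_le h.le]

lemma eq_of_block_eq_of_pos_eq {u v : ℕ} (hb : B.block u = B.block v) (hp : B.pos u = B.pos v) :
    u = v := by
  have hapex : u < B.ε ↔ v < B.ε := by simp only [← not_le, ← block_lt_q_iff, hb]
  by_cases hu : u < B.ε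
  · have := B.ε_le_one
    have := hapex.1 hu
    omega
  · simp only [block, pos, if_neg hu, if_neg (hapex.not.1 hu)] at hb hp
    have hu' := Nat.mod_add_div (u - B.ε) B.q
    have hv' := Nat.mod_add_div (v - B.ε) B.q
    rw [hb, hp] at hu'
    omega

lemma block_add_mul {i : ℕ} (hi : i < B.q) (t : ℕ) : B.block (B.ε + i + B.q * t) = i := by
  simp [block, add_assoc, Nat.add_mul_mod_self_left, Nat.mod_eq_of_lt hi]

lemma pos_add_mul {i : ℕ} (hi : i < B.q) (t : ℕ) : B.pos (B.ε + i + B.q * t) = t := by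
  simp [pos, add_assoc, Nat.add_mul_div_left _ _ B.q_pos, Nat.div_eq_of_lt hi]

variable (B) in
def IsFace (F : Finset (Fin n)) : Prop :=
  ∀ x ∈ F, ∀ y ∈ F, B.block x = B.block y →
    x = y ∨ (B.block x < B.a ∧ (B.pos y = B.pos x + 1 ∨ B.pos x = B.pos y + 1))

open Classical in
variable (B) in
noncomputable def complex (n : ℕ) : Finset (Finset (Fin n)) := univ.filter B.IsFace

variable (B) in
def slice (F : Finset (Fin n)) (j : ℕ) : Finset (Fin n) := F.filter fun v => B.block v = j

@[simp]
lemma mem_slice {F : Finset (Fin n)} {j : ℕ} {v : Fin n} :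
    v ∈ B.slice F j ↔ v ∈ F ∧ B.block v = j :=
  mem_filter

lemma mem_complex {F : Finset (Fin n)} : F ∈ B.complex n ↔ B.IsFace F := by
  simp [complex]

lemma IsFace.mono {F G : Finset (Fin n)} (hF : B.IsFace F) (hG : G ⊆ F) : B.IsFace G :=
  fun x hx y hy => hF x (hG hx) y (hG hy)

lemma isFace_singleton (v : Fin n) : B.IsFace {v} := by
  simp [IsFace]

lemma IsFace.pos_le {F : Finset (Fin n)} (hF : B.IsFace F) {x y : Fin n} (hx : x ∈ F) (hy : y ∈ F)
    (hxy : B.block x = B.block y) : B.pos x ≤ B.pos y + 1 := by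
  rcases hF x hx y hy hxy with rfl | ⟨-, h | h⟩ <;> omega

lemma IsFace.card_slice_le {F : Finset (Fin n)} (hF : B.IsFace F) (j : ℕ) :
    #(B.slice F j) ≤ if j < B.a then 2 else 1 := by
  have hslice : ∀ x ∈ B.slice F j, ∀ y ∈ B.slice F j, x ≠ y →
      j < B.a ∧ (B.pos y = B.pos x + 1 ∨ B.pos x = B.pos y + 1) := by
    intro x hx y hy hxy
    rw [mem_slice] at hx hy
    have := hF x hx.1 y hy.1 (hx.2.trans hy.2.symm)
    rw [hx.2] at this
    tauto
  split_ifs with hja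
  · by_contra! h
    obtain ⟨x, hx, y, hy, z, hz, hxy, hxz, hyz⟩ := two_lt_card.1 h
    have := (hslice x hx y hy hxy).2
    have := (hslice x hx z hz hxz).2
    have := (hslice y hy z hz hyz).2
    omega
  · exact card_le_one.2 fun x hx y hy => by_contra fun hxy => hja (hslice x hx y hy hxy).1

lemma card_eq_sum_card_slice (F : Finset (Fin n)) :
    #F = ∑ j ∈ range (B.q + B.ε), #(B.slice F j) :=
  card_eq_sum_card_fiberwise fun v _ => mem_range.2 (block_lt v)

lemma IsFace.card_le {F : Finset (Fin n)} (hF : B.IsFace F) : #F ≤ B.q + B.ε + B.a := by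
  rw [card_eq_sum_card_slice, ← sum_range_ite_lt (B.a_le_q.trans (Nat.le_add_right _ _))]
  exact sum_le_sum fun j _ => hF.card_slice_le j

variable {r : ℕ}

variable (B) in
/-- Block `j < q` lies on the line `x (2j + 1) = 1`, ordered by position along `x (2j)`; for odd `r`
the last block keeps only its coordinate `2j = r - 1`, and the apex has no coordinates and sits
at `0`. -/
def embed (v : Fin n) : Fin r → ℝ := fun k =>
  if k.1 = 2 * B.block v then B.pos v else if k.1 = 2 * B.block v + 1 then 1 else 0

lemma embed_apply_of_eq_two_mul {k : Fin r} {j : ℕ} (hk : k.1 = 2 * j) (v : Fin n) :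
    B.embed v k = if B.block v = j then (B.pos v : ℝ) else 0 := by
  rw [embed, hk]
  split_ifs <;> first | rfl | omega

lemma embed_apply_of_eq_two_mul_add_one {k : Fin r} {j : ℕ} (hk : k.1 = 2 * j + 1) (v : Fin n) :
    B.embed v k = if B.block v = j then 1 else 0 := by
  rw [embed, hk]
  split_ifs <;> first | rfl | omega

lemma sum_mul_embed_of_eq_two_mul {k : Fin r} {j : ℕ} (hk : k.1 = 2 * j) (F : Finset (Fin n))
    (w : Fin n → ℝ) : ∑ v ∈ F, w v * B.embed v k = ∑ v ∈ B.slice F j, w v * B.pos v := by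
  simp only [embed_apply_of_eq_two_mul hk, mul_ite, mul_zero, slice, sum_filter]

lemma sum_mul_embed_of_eq_two_mul_add_one {k : Fin r} {j : ℕ} (hk : k.1 = 2 * j + 1)
    (F : Finset (Fin n)) (w : Fin n → ℝ) :
    ∑ v ∈ F, w v * B.embed v k = ∑ v ∈ B.slice F j, w v := by
  simp only [embed_apply_of_eq_two_mul_add_one hk, mul_ite, mul_one, mul_zero, slice, sum_filter]

section SliceSums

variable {F G : Finset (Fin n)} {w z : Fin n → ℝ}
  (hpt : ∑ v ∈ F, w v • B.embed (r := r) v = ∑ v ∈ G, z v • B.embed v)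
include hpt

lemma sum_slice_eq_of_sum_smul_eq (hr : r + 1 = 2 * B.q + B.ε)
    (hmass : ∑ v ∈ F, w v = ∑ v ∈ G, z v) (j : ℕ) :
    ∑ v ∈ B.slice F j, w v = ∑ v ∈ B.slice G j, z v := by
  have hread : ∀ i, i + 1 < B.q + B.ε →
      ∑ v ∈ B.slice F i, w v = ∑ v ∈ B.slice G i, z v := fun i hi => by
    have := congrFun hpt ⟨2 * i + 1, by have := B.ε_le_one; omega⟩
    simp only [Finset.sum_apply, Pi.smul_apply, smul_eq_mul] at this
    rwa [sum_mul_embed_of_eq_two_mul_add_one rfl, sum_mul_embed_of_eq_two_mul_add_one rfl] at this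
  have htotal : ∀ (H : Finset (Fin n)) (u : Fin n → ℝ),
      ∑ i ∈ range (B.q + B.ε), ∑ v ∈ B.slice H i, u v = ∑ v ∈ H, u v := fun H u =>
    sum_fiberwise_of_maps_to (fun (v : Fin n) _ => mem_range.2 (block_lt (B := B) v)) u
  -- block `q + ε - 1` (the apex, or the last block for odd `r`) has no mass coordinate
  obtain ⟨m, hm⟩ : ∃ m, B.q + B.ε = m + 1 := ⟨B.q + B.ε - 1, by have := B.q_pos; omega⟩
  rcases lt_trichotomy j m with hj | rfl | hj
  · exact hread j (by omega)
  · rw [← htotal F, ← htotal G, hm, sum_range_succ, sum_range_succ,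
      sum_congr rfl fun i hi => hread i (by rw [hm]; simpa using hi)] at hmass
    exact add_left_cancel hmass
  · have hempty : ∀ H : Finset (Fin n), B.slice H j = ∅ := fun H =>
      filter_false_of_mem fun v _ => by have := block_lt (B := B) v; omega
    simp [hempty]

lemma sum_slice_mul_pos_eq_of_sum_smul_eq (hr : r + 1 = 2 * B.q + B.ε) (j : ℕ) :
    ∑ v ∈ B.slice F j, w v * B.pos v = ∑ v ∈ B.slice G j, z v * B.pos v := by
  by_cases hj : j < B.q
  · have := congrFun hpt ⟨2 * j, by omega⟩
    simp only [Finset.sum_apply, Pi.smul_apply, smul_eq_mul] at this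
    rwa [sum_mul_embed_of_eq_two_mul rfl, sum_mul_embed_of_eq_two_mul rfl] at this
  · have hapex : ∀ (H : Finset (Fin n)) (u : Fin n → ℝ), ∑ v ∈ B.slice H j, u v * B.pos v = 0 :=
      fun H u => sum_eq_zero fun v hv => by
        have hvj : B.block v = j := (mem_slice.1 hv).2
        rw [pos_eq_zero_of_lt (not_le.1 fun h => hj (hvj ▸ block_lt_q_iff.2 h))]
        simp
    rw [hapex, hapex]

end SliceSums

theorem convexHull_inter_eq (hr : r + 1 = 2 * B.q + B.ε) {F G : Finset (Fin n)}
    (hF : B.IsFace F) (hG : B.IsFace G) :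
    convexHull ℝ (B.embed '' (F : Set (Fin n))) ∩ convexHull ℝ (B.embed '' (G : Set (Fin n))) =
      convexHull ℝ (B.embed (r := r) '' ((F ∩ G : Finset (Fin n)) : Set (Fin n))) := by
  refine convexHull_image_inter_eq fun w z hw hz hw₁ hz₁ hwz v hvF hvG => ?_
  refine eq_zero_of_mass_moment_eq_of_consecutive (p := fun x : Fin n => B.pos x)
    (mem_slice.2 ⟨hvF, rfl⟩) (fun x hx => hw x (mem_slice.1 hx).1)
    (fun x hx => hz x (mem_slice.1 hx).1)
    (sum_slice_eq_of_sum_smul_eq hwz hr (hw₁.trans hz₁.symm) _)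
    (sum_slice_mul_pos_eq_of_sum_smul_eq hwz hr _) ?_ ?_ ?_
  · intro x hx
    obtain ⟨hxF, hxv⟩ := mem_slice.1 hx
    exact ⟨hF.pos_le hxF hvF hxv, hF.pos_le hvF hxF hxv.symm⟩
  · intro x hx y hy
    exact hG.pos_le (mem_slice.1 hx).1 (mem_slice.1 hy).1
      ((mem_slice.1 hx).2.trans (mem_slice.1 hy).2.symm)
  · intro x hx hxv
    obtain ⟨hxG, hxb⟩ := mem_slice.1 hx
    exact hvG (Fin.ext (eq_of_block_eq_of_pos_eq hxb hxv) ▸ hxG)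

theorem affineIndependent_embed (hr : r + 1 = 2 * B.q + B.ε) {F : Finset (Fin n)}
    (hF : B.IsFace F) : AffineIndependent ℝ (fun v : F => B.embed (r := r) v.1) :=
  affineIndependent_of_convexHull_image_inter_eq fun _ hG _ hH =>
    convexHull_inter_eq hr (hF.mono hG) (hF.mono hH)

variable (B) in
def facet (c : Fin B.q → ℕ) : Finset (Fin n) :=
  univ.filter fun v => (v : ℕ) < B.ε ∨
    ∃ i : Fin B.q, B.block v = i ∧ (B.pos v = c i ∨ (i.1 < B.a ∧ B.pos v = c i + 1))

lemma mem_facet_iff_of_block_eq {c : Fin B.q → ℕ} {v : Fin n} {i : Fin B.q}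
    (hv : B.block v = i) : v ∈ B.facet c ↔ B.pos v = c i ∨ (i.1 < B.a ∧ B.pos v = c i + 1) := by
  have hvε : ¬ (v : ℕ) < B.ε := not_lt.2 (block_lt_q_iff.1 (hv ▸ i.2))
  simp only [facet, mem_filter, mem_univ, true_and, hvε, false_or]
  constructor
  · rintro ⟨i', hi', h⟩
    obtain rfl : i' = i := Fin.ext (hi'.symm.trans hv)
    exact h
  · exact fun h => ⟨i, hv, h⟩

lemma isFace_facet (c : Fin B.q → ℕ) : B.IsFace (B.facet (n := n) c) := by
  intro x hx y hy hxy
  by_cases hxq : B.block x < B.q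
  · have hx' := (mem_facet_iff_of_block_eq (i := ⟨_, hxq⟩) rfl).1 hx
    have hy' := (mem_facet_iff_of_block_eq (i := ⟨_, hxq⟩) hxy.symm).1 hy
    by_cases hpos : B.pos x = B.pos y
    · exact Or.inl (Fin.ext (eq_of_block_eq_of_pos_eq hxy hpos))
    · right
      dsimp only at hx' hy'
      omega
  · have hyq : ¬ B.block y < B.q := hxy ▸ hxq
    rw [block_lt_q_iff] at hxq hyq
    have := B.ε_le_one
    exact Or.inl (Fin.ext (by omega))

lemma card_facet {c : Fin B.q → ℕ} (hc : ∀ i : Fin B.q, B.ε + i + B.q * (c i + 1) < n) :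
    #(B.facet (n := n) c) = B.q + B.ε + B.a := by
  have := B.q_pos
  refine le_antisymm (isFace_facet c).card_le ?_
  rw [card_eq_sum_card_slice, ← sum_range_ite_lt (B.a_le_q.trans (Nat.le_add_right _ _))]
  refine sum_le_sum fun j hj => ?_
  by_cases hjq : j < B.q
  · obtain ⟨i, rfl⟩ : ∃ i : Fin B.q, i.1 = j := ⟨⟨j, hjq⟩, rfl⟩
    have hmem : ∀ t (ht : B.ε + i + B.q * t < n), (t = c i ∨ (i.1 < B.a ∧ t = c i + 1)) →
        (⟨_, ht⟩ : Fin n) ∈ B.slice (B.facet c) i := fun t ht h =>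
      mem_slice.2 ⟨(mem_facet_iff_of_block_eq (block_add_mul i.2 t)).2
        (by rwa [pos_add_mul i.2]), block_add_mul i.2 t⟩
    have hlt := hc i
    rw [mul_add, mul_one] at hlt
    split_ifs with hia
    · exact one_lt_card.2 ⟨_, hmem _ (by omega) (Or.inl rfl), _,
        hmem (c i + 1) (by rw [mul_add, mul_one]; omega) (Or.inr ⟨hia, rfl⟩),
        by simp [Fin.ext_iff, mul_add, B.q_pos.ne']⟩
    · exact card_pos.2 ⟨_, hmem _ (by omega) (Or.inl rfl)⟩
  · have hn : 0 < n := by have := hc ⟨0, B.q_pos⟩; omega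
    have hε : 0 < B.ε := by have := mem_range.1 hj; omega
    rw [if_neg (by have := B.a_le_q; omega)]
    refine card_pos.2 ⟨⟨0, hn⟩, mem_slice.2 ⟨mem_filter.2 ⟨mem_univ _, Or.inl hε⟩, ?_⟩⟩
    have := mem_range.1 hj
    have := B.ε_le_one
    simp only [block, if_pos hε]
    omega

lemma facet_injOn :
    Set.InjOn (B.facet (n := n)) {c | ∀ i : Fin B.q, B.ε + i + B.q * (c i + 1) < n} := by
  have key : ∀ c c' : Fin B.q → ℕ, (∀ i : Fin B.q, B.ε + i + B.q * (c i + 1) < n) →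
      B.facet (n := n) c = B.facet c' → ∀ i, c i = c' i ∨ c i = c' i + 1 := fun c c' hc h i => by
    have hlt := hc i
    rw [mul_add, mul_one] at hlt
    have hu : (⟨_, (by omega : B.ε + i + B.q * c i < n)⟩ : Fin n) ∈ B.facet c :=
      (mem_facet_iff_of_block_eq (block_add_mul i.2 _)).2 (Or.inl (pos_add_mul i.2 _))
    rw [h, mem_facet_iff_of_block_eq (block_add_mul i.2 _), pos_add_mul i.2] at hu
    omega
  intro c hc c' hc' h
  funext i
  have := key c c' hc h i
  have := key c' c hc' h.symm i
  omega

lemma exists_pow_le_card_facets (hn : B.ε + 2 * B.q ≤ n) :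
    ∃ m : ℕ, 0 < m ∧ n ≤ 3 * B.q * m ∧
      m ^ B.q ≤ #((B.complex n).filter fun F => #F = B.q + B.ε + B.a) := by
  have hq := B.q_pos
  set L := (n - B.ε) / B.q
  have hL : 2 ≤ L := (Nat.le_div_iff_mul_le hq).2 (by omega)
  have hLn : B.q * L ≤ n - B.ε := Nat.mul_div_le _ _
  have hnL : n - B.ε < B.q * (L + 1) := Nat.lt_mul_div_succ _ hq
  refine ⟨L - 1, by omega, ?_, ?_⟩
  · have h1 : B.q ≤ B.q * (L - 1) := Nat.le_mul_of_pos_right _ (by omega)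
    have h2 : B.q * (L + 1) = B.q * (L - 1) + 2 * B.q := by
      rw [show L + 1 = L - 1 + 2 by omega]
      ring
    have := B.ε_le_one
    rw [mul_assoc]
    omega
  · have hc : ∀ c ∈ Fintype.piFinset fun _ : Fin B.q => range (L - 1),
        ∀ i : Fin B.q, B.ε + i + B.q * (c i + 1) < n := fun c hc i => by
      have hci := mem_range.1 (Fintype.mem_piFinset.1 hc i)
      have : B.q * (c i + 2) ≤ B.q * L := Nat.mul_le_mul_left _ (by omega)
      rw [mul_add] at this ⊢
      omega
    calc (L - 1) ^ B.q = #(Fintype.piFinset fun _ : Fin B.q => range (L - 1)) := by simp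
      _ ≤ _ := card_le_card_of_injOn _
          (fun c hc' => mem_filter.2 ⟨mem_complex.2 (isFace_facet c), card_facet (hc c hc')⟩)
          (facet_injOn.mono fun c hc' => hc c hc')

end BlockLayout

/-- For 1 ≤ d ≤ r ≤ 2d there is c > 0 such that for every n ≥ r+1 there is a
d-dimensional simplicial complex on n vertices that embeds linearly into ℝ^r
and has at least c · n^⌈r/2⌉ simplices of dimension d. -/
theorem stmt_4 (d r : ℕ) (hd : 1 ≤ d) (hdr : d ≤ r) (hr : r ≤ 2 * d) :
    ∃ c : ℝ, 0 < c ∧ ∀ n : ℕ, r + 1 ≤ n →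
      ∃ K : Finset (Finset (Fin n)),
        K.Nonempty ∧
        (∀ F ∈ K, ∀ G ⊆ F, G ∈ K) ∧
        (∀ F ∈ K, F.card ≤ d + 1) ∧
        (∃ F ∈ K, F.card = d + 1) ∧
        (∀ v : Fin n, {v} ∈ K) ∧
        (∃ f : Fin n → (Fin r → ℝ),
          (∀ F ∈ K, AffineIndependent ℝ (fun v : F => f v.1)) ∧
          (∀ F ∈ K, ∀ G ∈ K,
            convexHull ℝ (f '' (F : Set (Fin n))) ∩ convexHull ℝ (f '' (G : Set (Fin n))) =
              convexHull ℝ (f '' ((F ∩ G : Finset (Fin n)) : Set (Fin n))))) ∧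
        c * (n : ℝ) ^ ((r + 1) / 2 : ℕ) ≤ ((K.filter fun F => F.card = d + 1).card : ℝ) := by
  let B : BlockLayout :=
    ⟨(r + 1) / 2, (r + 1) % 2, d + (r + 1) / 2 - r, by omega, by omega, by omega⟩
  have hrB : r + 1 = 2 * B.q + B.ε := by
    show r + 1 = 2 * ((r + 1) / 2) + (r + 1) % 2
    omega
  have hdB : d + 1 = B.q + B.ε + B.a := by
    show d + 1 = (r + 1) / 2 + (r + 1) % 2 + (d + (r + 1) / 2 - r)
    omega
  have hq : (0 : ℝ) < B.q := by exact_mod_cast B.q_pos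
  refine ⟨(1 / (3 * B.q)) ^ B.q, by positivity, fun n hn => ?_⟩
  obtain ⟨m, hm, hnm, hcount⟩ := B.exists_pow_le_card_facets (n := n) (by omega)
  obtain ⟨F, hF⟩ := card_pos.1 (lt_of_lt_of_le (pow_pos hm _) hcount)
  rw [hdB]
  open BlockLayout in
  refine ⟨B.complex n, ⟨∅, mem_complex.2 fun _ h => absurd h (notMem_empty _)⟩,
    fun F hF G hG => mem_complex.2 ((mem_complex.1 hF).mono hG),
    fun F hF => (mem_complex.1 hF).card_le, ⟨F, mem_filter.1 hF⟩,
    fun v => mem_complex.2 (isFace_singleton v),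
    ⟨B.embed, fun F hF => affineIndependent_embed hrB (mem_complex.1 hF),
      fun F hF G hG => convexHull_inter_eq hrB (mem_complex.1 hF) (mem_complex.1 hG)⟩, ?_⟩
  calc (1 / (3 * B.q) : ℝ) ^ B.q * (n : ℝ) ^ B.q = ((n : ℝ) / (3 * B.q)) ^ B.q := by
        rw [← mul_pow, one_div_mul_eq_div]
    _ ≤ (m : ℝ) ^ B.q := by
        gcongr
        rw [div_le_iff₀ (by positivity)]
        exact_mod_cast (by linarith [hnm] : n ≤ m * (3 * B.q))
    _ ≤ _ := by exact_mod_cast hcount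
end

section
/- Let n ≥ 6 and let K be a shifted simplicial complex of dimension 2 that is a subcomplex of Δ(5,n). Then f_2(K) ≤ 4·f_1(K) − 8, and in particular f_2(K) < 4·f_1(K). -/
/-- `S` is a maximal simplex of Δ(d,n): a d-element subset of [n] such that
for every k ∈ [n] with k ∉ S the interval {k+1, …, d-k+2} is contained in S. -/
def deltaMaxFace (d n : ℕ) (S : Finset ℕ) : Prop :=
  S ⊆ Finset.Icc 1 n ∧ S.card = d ∧
    ∀ k ∈ Finset.Icc 1 n, k ∉ S → Finset.Icc (k + 1) (d - k + 2) ⊆ S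

/-!
Send each triangle `F` of `K` to the edge `eraseMin F` obtained by deleting its least vertex.
Since every maximal face of `Δ(5,n)` has at least three of its five vertices in `{1,2,3,4}`,
any three of its vertices include one of `1,…,4`, so the least vertex of a triangle lies in
`{1,2,3,4}` and each fibre of `eraseMin` has at most four elements. The image avoids the
edges through the vertex `1`, and shifting a triangle `{a < b < c}` to `{1, b, c}` produces two
such edges `{1, b}`, `{1, c}`. Hence `f₂ ≤ 4 (f₁ - 2)`.
-/

open Finset

namespace deltaMaxFace

variable {n : ℕ} {S : Finset ℕ}

lemma five_le (hS : deltaMaxFace 5 n S) : 5 ≤ n := by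
  simpa [hS.2.1] using card_le_card hS.1

lemma one_le_of_mem (hS : deltaMaxFace 5 n S) {x : ℕ} (hx : x ∈ S) : 1 ≤ x :=
  (mem_Icc.mp (hS.1 hx)).1

lemma card_Icc_one_four_sdiff_le_one (hS : deltaMaxFace 5 n S) : #(Icc 1 4 \ S) ≤ 1 := by
  refine card_le_one.mpr fun k hk l hl => ?_
  simp only [mem_sdiff, mem_Icc] at hk hl
  have hn := hS.five_le
  by_contra hkl
  -- if `k < l ≤ 4` were both missing from `S`, then `l ∈ Icc (k + 1) (7 - k) ⊆ S`
  rcases Nat.lt_or_gt_of_ne hkl with h | h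
  · exact hl.2 (hS.2.2 k (mem_Icc.mpr ⟨hk.1.1, by omega⟩) hk.2 (mem_Icc.mpr ⟨h, by omega⟩))
  · exact hk.2 (hS.2.2 l (mem_Icc.mpr ⟨hl.1.1, by omega⟩) hl.2 (mem_Icc.mpr ⟨h, by omega⟩))

lemma three_le_card_inter_Icc_one_four (hS : deltaMaxFace 5 n S) : 3 ≤ #(S ∩ Icc 1 4) := by
  have h := card_sdiff_add_card_inter (Icc 1 4) S
  rw [inter_comm] at h
  have := hS.card_Icc_one_four_sdiff_le_one
  simp only [Nat.card_Icc] at h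
  omega

lemma exists_mem_le_four (hS : deltaMaxFace 5 n S) {F : Finset ℕ} (hFS : F ⊆ S)
    (hF : #F = 3) : ∃ x ∈ F, x ≤ 4 := by
  obtain ⟨x, hx⟩ := inter_nonempty_of_card_lt_card_add_card hFS
    (inter_subset_left : S ∩ Icc 1 4 ⊆ S)
    (by rw [hS.2.1, hF]; have := hS.three_le_card_inter_Icc_one_four; omega)
  simp only [mem_inter, mem_Icc] at hx
  exact ⟨x, hx.1, hx.2.2.2⟩

lemma sInf_mem_Icc_one_four (hS : deltaMaxFace 5 n S) {F : Finset ℕ} (hFS : F ⊆ S)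
    (hF : #F = 3) : sInf (F : Set ℕ) ∈ Icc 1 4 := by
  obtain ⟨x, hx, hx4⟩ := hS.exists_mem_le_four hFS hF
  exact mem_Icc.mpr ⟨hS.one_le_of_mem (hFS (Nat.sInf_mem ⟨x, hx⟩)),
    (Nat.sInf_le (mem_coe.mpr hx)).trans hx4⟩

end deltaMaxFace

noncomputable def eraseMin (F : Finset ℕ) : Finset ℕ := F.erase (sInf (F : Set ℕ))

lemma sInf_mem_of_nonempty {F : Finset ℕ} (hF : F.Nonempty) : sInf (F : Set ℕ) ∈ F :=
  Nat.sInf_mem (coe_nonempty.mpr hF)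

lemma insert_sInf_eraseMin {F : Finset ℕ} (hF : F.Nonempty) :
    insert (sInf (F : Set ℕ)) (eraseMin F) = F :=
  insert_erase (sInf_mem_of_nonempty hF)

lemma card_eraseMin {F : Finset ℕ} (hF : F.Nonempty) : #(eraseMin F) = #F - 1 :=
  card_erase_of_mem (sInf_mem_of_nonempty hF)

lemma notMem_eraseMin_of_le {F : Finset ℕ} {a : ℕ} (ha : ∀ x ∈ F, a ≤ x) : a ∉ eraseMin F := by
  intro h
  have hmin := Nat.sInf_le (mem_coe.mpr (mem_of_mem_erase h))
  exact ne_of_mem_erase h (le_antisymm hmin (le_csInf ⟨a, mem_of_mem_erase h⟩ ha)).symm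

lemma card_le_mul_card_of_eraseMin_mapsTo {T : Finset (Finset ℕ)} {E : Finset (Finset ℕ)}
    {A : Finset ℕ} (hT : ∀ F ∈ T, F.Nonempty ∧ sInf (F : Set ℕ) ∈ A)
    (hE : ∀ F ∈ T, eraseMin F ∈ E) : #T ≤ #A * #E := by
  refine card_le_mul_card_image_of_maps_to hE _ fun P _ => ?_
  calc #{F ∈ T | eraseMin F = P} ≤ #(A.image fun a => insert a P) := by
        refine card_le_card fun F hF => ?_
        obtain ⟨hFT, rfl⟩ := mem_filter.mp hF
        exact mem_image.mpr ⟨_, (hT F hFT).2, insert_sInf_eraseMin (hT F hFT).1⟩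
    _ ≤ #A := card_image_le

section Shifted

variable {K : Finset (Finset ℕ)}

lemma insert_one_eraseMin_mem
    (hshift : ∀ F ∈ K, ∀ i ∈ F, ∀ j, 1 ≤ j → j < i → j ∉ F → insert j (F.erase i) ∈ K)
    {F : Finset ℕ} (hFK : F ∈ K) (hF : F.Nonempty) (hpos : ∀ x ∈ F, 1 ≤ x) :
    insert 1 (eraseMin F) ∈ K := by
  have hmin := sInf_mem_of_nonempty hF
  rcases (hpos _ hmin).eq_or_lt with h | h
  · rwa [h, insert_sInf_eraseMin hF]
  · exact hshift F hFK _ hmin 1 le_rfl h fun h1 => (Nat.sInf_le (mem_coe.mpr h1)).not_gt h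

lemma two_le_card_edges_through_one
    (hdown : ∀ F ∈ K, ∀ G ⊆ F, G ∈ K)
    (hshift : ∀ F ∈ K, ∀ i ∈ F, ∀ j, 1 ≤ j → j < i → j ∉ F → insert j (F.erase i) ∈ K)
    {F : Finset ℕ} (hFK : F ∈ K) (hF : #F = 3) (hpos : ∀ x ∈ F, 1 ≤ x) :
    2 ≤ #{e ∈ K | #e = 2 ∧ 1 ∈ e} := by
  have hne : F.Nonempty := card_pos.mp (by omega)
  have hG := insert_one_eraseMin_mem hshift hFK hne hpos
  have h1 : 1 ∉ eraseMin F := notMem_eraseMin_of_le hpos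
  have hcard : #(eraseMin F) = 2 := by rw [card_eraseMin hne, hF]
  calc 2 = #((eraseMin F).image fun b => ({1, b} : Finset ℕ)) := by
        rw [card_image_of_injOn, hcard]
        intro b hb c _ hbc
        have hb' : b ∈ ({1, c} : Finset ℕ) := by
          rw [← show ({1, b} : Finset ℕ) = {1, c} from hbc]
          exact mem_insert_of_mem (mem_singleton_self b)
        rcases mem_insert.mp hb' with rfl | h
        · exact absurd hb h1
        · exact mem_singleton.mp h
    _ ≤ _ := by
        refine card_le_card fun e he => ?_
        obtain ⟨b, hb, rfl⟩ := mem_image.mp he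
        refine mem_filter.mpr ⟨hdown _ hG _ ?_, ?_, mem_insert_self _ _⟩
        · exact insert_subset_insert _ (singleton_subset_iff.mpr hb)
        · exact card_pair (fun h => h1 (h ▸ hb))

end Shifted

theorem stmt_5_general (n : ℕ) (K : Finset (Finset ℕ))
    (hdown : ∀ F ∈ K, ∀ G ⊆ F, G ∈ K)
    (hshift : ∀ F ∈ K, ∀ i ∈ F, ∀ j, 1 ≤ j → j < i → j ∉ F → insert j (F.erase i) ∈ K)
    (hdim' : ∃ F ∈ K, F.card = 3)
    (hsub : ∀ F ∈ K, ∃ S, deltaMaxFace 5 n S ∧ F ⊆ S) :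
    (K.filter fun F => F.card = 3).card + 8 ≤ 4 * (K.filter fun F => F.card = 2).card ∧
    (K.filter fun F => F.card = 3).card < 4 * (K.filter fun F => F.card = 2).card := by
  have hpos : ∀ F ∈ K, ∀ x ∈ F, 1 ≤ x := fun F hF x hx => by
    obtain ⟨S, hS, hFS⟩ := hsub F hF
    exact hS.one_le_of_mem (hFS hx)
  obtain ⟨F₀, hF₀K, hF₀⟩ := hdim'
  have hthrough := two_le_card_edges_through_one hdown hshift hF₀K hF₀ (hpos F₀ hF₀K)
  have hmin : ∀ F ∈ K.filter (fun F => #F = 3), F.Nonempty ∧ sInf (F : Set ℕ) ∈ Icc 1 4 := by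
    intro F hF
    obtain ⟨hFK, hF3⟩ := mem_filter.mp hF
    obtain ⟨S, hS, hFS⟩ := hsub F hFK
    exact ⟨card_pos.mp (by omega), hS.sInf_mem_Icc_one_four hFS hF3⟩
  have hedge : ∀ F ∈ K.filter (fun F => #F = 3), eraseMin F ∈ {e ∈ K | #e = 2 ∧ 1 ∉ e} := by
    intro F hF
    obtain ⟨hFK, hF3⟩ := mem_filter.mp hF
    refine mem_filter.mpr ⟨hdown F hFK _ (erase_subset _ _), ?_, notMem_eraseMin_of_le (hpos F hFK)⟩
    rw [card_eraseMin (card_pos.mp (by omega)), hF3]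
  have hcount := card_le_mul_card_of_eraseMin_mapsTo hmin hedge
  have hsplit := card_filter_add_card_filter_not (s := K.filter fun F => #F = 2) (1 ∈ ·)
  simp only [filter_filter, Nat.card_Icc] at hsplit hcount
  omega

/-- A shifted 2-dimensional subcomplex K of Δ(5,n) satisfies
f₂(K) ≤ 4·f₁(K) − 8, in particular f₂(K) < 4·f₁(K). -/
theorem stmt_5 (n : ℕ) (hn : 6 ≤ n) (K : Finset (Finset ℕ))
    (hne : K.Nonempty)
    (hdown : ∀ F ∈ K, ∀ G ⊆ F, G ∈ K)
    (hshift : ∀ F ∈ K, ∀ i ∈ F, ∀ j, 1 ≤ j → j < i → j ∉ F → insert j (F.erase i) ∈ K)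
    (hdim : ∀ F ∈ K, F.card ≤ 3)
    (hdim' : ∃ F ∈ K, F.card = 3)
    (hsub : ∀ F ∈ K, ∃ S, deltaMaxFace 5 n S ∧ F ⊆ S) :
    (K.filter fun F => F.card = 3).card + 8 ≤ 4 * (K.filter fun F => F.card = 2).card ∧
    (K.filter fun F => F.card = 3).card < 4 * (K.filter fun F => F.card = 2).card :=
  stmt_5_general n K hdown hshift hdim' hsub
end

section
/- Let d ≥ 1, n ≥ 2d+1, and let S ⊆ [n] with |S| = d+1. Then S is the vertex set of a d-face of the cyclic polytope C_{2d+1}(n) — that is, S is contained in some (2d+1)-element subset of [n] satisfying Gale's evenness condition — if and only if 1 ∈ S, or n ∈ S, or there exists i with {i, i+1} ⊆ S. -/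
/-!
In a Gale-even `T`, two consecutive non-elements enclose an even number of elements, so the
parity of `#{k ∈ T | k ≤ s}` pairs every `s ∈ T` other than `1` and `n` injectively with a
neighbour `s ± 1 ∈ T`. If `S` avoids `1`, `n` and pairs of consecutive numbers, the partners of
its elements lie outside `S`, whence `#T ≥ 2 * #S = 2 * d + 2`.

Conversely, scanning `S` downwards and covering each element `a` by the block `{a - 1, a}` (one
block for two consecutive elements, `{1}` alone for `1`, `{n}` alone for `n`) gives a Gale-even
cover of size at most `2 * d + 1`, and a Gale-even set can be enlarged one element at a time by
adding its largest non-element in `[n]`.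
-/

/-- `T ⊆ [n]` satisfies Gale's evenness condition: for all i < j in [n] ∖ T,
the number of elements k ∈ T with i < k < j is even. -/
def GaleEven (n : ℕ) (T : Finset ℕ) : Prop :=
  T ⊆ Finset.Icc 1 n ∧
    ∀ i ∈ Finset.Icc 1 n, ∀ j ∈ Finset.Icc 1 n, i ∉ T → j ∉ T → i < j →
      Even (T.filter fun k => i < k ∧ k < j).card

open Finset

def prefixCard (T : Finset ℕ) (x : ℕ) : ℕ := #{k ∈ T | k ≤ x}

section prefixCard

variable {T : Finset ℕ} {x i j : ℕ}

theorem prefixCard_add_one_of_mem (h : x + 1 ∈ T) :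
    prefixCard T (x + 1) = prefixCard T x + 1 := by
  rw [prefixCard, prefixCard,
    ← card_insert_of_notMem (s := {k ∈ T | k ≤ x}) (a := x + 1) (by simp)]
  congr 1
  ext k
  simp only [mem_filter, mem_insert]
  grind

theorem prefixCard_add_one_of_notMem (h : x + 1 ∉ T) : prefixCard T (x + 1) = prefixCard T x := by
  unfold prefixCard
  congr 1
  ext k
  simp only [mem_filter]
  grind

theorem prefixCard_eq_add_card_filter (hij : i < j) (hj : j ∉ T) :
    prefixCard T j = prefixCard T i + #(T.filter fun k => i < k ∧ k < j) := by
  unfold prefixCard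
  rw [← card_union_of_disjoint (disjoint_filter.2 fun k _ hk => by omega)]
  congr 1
  ext k
  simp only [mem_filter, mem_union]
  grind

end prefixCard

namespace GaleEven

variable {n : ℕ} {T : Finset ℕ}

theorem empty : GaleEven n ∅ := ⟨empty_subset _, by simp⟩

theorem singleton_one (hn : 1 ≤ n) : GaleEven n {1} := by
  refine ⟨by simpa using hn, fun i hi j _ _ _ _ => ?_⟩
  rw [filter_singleton, if_neg (by simp at hi; omega)]
  simp

theorem insert_of_Ioc_subset (hT : GaleEven n T) {j : ℕ} (hj : j ∈ Icc 1 n)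
    (hjT : Ioc j n ⊆ T) : GaleEven n (insert j T) := by
  refine ⟨insert_subset hj hT.1, fun i hi k hk hiT hkT hik => ?_⟩
  rw [mem_insert, not_or] at hiT hkT
  have hkj : k < j := by
    by_contra h
    exact hkT.2 (hjT (mem_Ioc.2 ⟨by omega, (mem_Icc.1 hk).2⟩))
  rw [filter_insert, if_neg (by omega)]
  exact hT.2 i hi k hk hiT.2 hkT.2 hik

theorem insert_insert_add_one (hT : GaleEven n T) {a : ℕ} (ha : 1 ≤ a) (han : a + 1 ≤ n)
    (haT : a ∉ T) (haT' : a + 1 ∉ T) : GaleEven n (insert a (insert (a + 1) T)) := by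
  refine ⟨insert_subset (mem_Icc.2 ⟨ha, by omega⟩)
    (insert_subset (mem_Icc.2 ⟨by omega, han⟩) hT.1), fun i hi j hj hiT hjT hij => ?_⟩
  simp only [mem_insert, not_or] at hiT hjT
  have hev := hT.2 i hi j hj hiT.2.2 hjT.2.2 hij
  rw [filter_insert, filter_insert]
  by_cases h : i < a ∧ a < j
  · rw [if_pos h, if_pos (by omega), card_insert_of_notMem (by simp [haT]),
      card_insert_of_notMem (by simp [haT'])]
    exact hev.add even_two
  · rw [if_neg h, if_neg (by omega)]
    exact hev

theorem insert_insert_of_subset_Icc {m : ℕ} (hT : GaleEven n T) (hTm : T ⊆ Icc 1 m)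
    (hmn : m + 2 ≤ n) :
    GaleEven n (insert (m + 1) (insert (m + 2) T)) ∧
      insert (m + 1) (insert (m + 2) T) ⊆ Icc 1 (m + 2) ∧
      #(insert (m + 1) (insert (m + 2) T)) = #T + 2 := by
  have h1 : m + 1 ∉ T := fun h => by simpa using hTm h
  have h2 : m + 2 ∉ T := fun h => by simpa using hTm h
  refine ⟨hT.insert_insert_add_one (by omega) (by omega) h1 h2, ?_, ?_⟩
  · exact insert_subset (by simp) (insert_subset (by simp)
      (hTm.trans (Icc_subset_Icc_right (by omega))))
  · rw [card_insert_of_notMem (by simp [h1]), card_insert_of_notMem h2]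

theorem exists_superset_card_eq (hT : GaleEven n T) {k : ℕ} (hTk : #T ≤ k) (hkn : k ≤ n) :
    ∃ T', GaleEven n T' ∧ #T' = k ∧ T ⊆ T' := by
  induction k, hTk using Nat.le_induction with
  | base => exact ⟨T, hT, rfl, Subset.rfl⟩
  | succ k hTk ih =>
    obtain ⟨T', hT', hcard, hTT'⟩ := ih (by omega)
    have hne : (Icc 1 n \ T').Nonempty := by
      rw [nonempty_iff_ne_empty, Ne, sdiff_eq_empty_iff_subset]
      intro h
      have := card_le_card h
      simp only [Nat.card_Icc] at this
      omega
    have hj := mem_sdiff.1 (max'_mem _ hne)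
    refine ⟨insert _ T', hT'.insert_of_Ioc_subset hj.1 ?_,
      by rw [card_insert_of_notMem hj.2, hcard], hTT'.trans (subset_insert _ _)⟩
    intro i hi
    have hj1 := (mem_Icc.1 hj.1).1
    rw [mem_Ioc] at hi
    by_contra hiT
    have := le_max' (Icc 1 n \ T') i (mem_sdiff.2 ⟨mem_Icc.2 ⟨by omega, hi.2⟩, hiT⟩)
    omega

theorem prefixCard_mod_two_eq (hT : GaleEven n T) {i j : ℕ} (hi : i ∈ Icc 1 n)
    (hj : j ∈ Icc 1 n) (hiT : i ∉ T) (hjT : j ∉ T) :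
    prefixCard T i % 2 = prefixCard T j % 2 := by
  wlog hij : i < j generalizing i j
  · rcases (not_lt.1 hij).eq_or_lt with h | h
    · rw [h]
    · exact (this hj hi hjT hiT h).symm
  obtain ⟨r, hr⟩ := hT.2 i hi j hj hiT hjT hij
  rw [prefixCard_eq_add_card_filter hij hjT, hr]
  omega

theorem exists_prefixCard_mod_two_eq (hT : GaleEven n T) :
    ∃ δ, ∀ j ∈ Icc 1 n, j ∉ T → prefixCard T j % 2 = δ := by
  by_cases h : ∃ j₀ ∈ Icc 1 n, j₀ ∉ T
  · obtain ⟨j₀, hj₀, hj₀T⟩ := h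
    exact ⟨_, fun j hj hjT => hT.prefixCard_mod_two_eq hj hj₀ hjT hj₀T⟩
  · exact ⟨0, fun j hj hjT => (h ⟨j, hj, hjT⟩).elim⟩

end GaleEven

theorem one_mem_or_exists_add_one_mem_erase {S : Finset ℕ} {a : ℕ}
    (h : 1 ∈ S ∨ ∃ i, i ∈ S ∧ i + 1 ∈ S) (ha : a ≠ 1) (hprev : a - 1 ∉ S)
    (hnext : a + 1 ∉ S) :
    1 ∈ S.erase a ∨ ∃ i, i ∈ S.erase a ∧ i + 1 ∈ S.erase a := by
  simp only [mem_erase]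
  rcases h with h | ⟨i, hi, hi1⟩
  · exact .inl ⟨ha.symm, h⟩
  · refine .inr ⟨i, ⟨?_, hi⟩, ?_, hi1⟩ <;> rintro rfl
    · exact hnext hi1
    · exact hprev hi

theorem exists_galeEven_superset {n : ℕ} (m : ℕ) (hmn : m ≤ n) (S : Finset ℕ)
    (hS : S ⊆ Icc 1 m) :
    ∃ T, GaleEven n T ∧ S ⊆ T ∧ T ⊆ Icc 1 m ∧ #T ≤ 2 * #S ∧
      ((1 ∈ S ∨ ∃ i, i ∈ S ∧ i + 1 ∈ S) → #T < 2 * #S) := by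
  induction m using Nat.strong_induction_on generalizing S with
  | _ m ih =>
  rcases m with _ | _ | m
  · obtain rfl : S = ∅ := by simpa using hS
    exact ⟨∅, .empty, Subset.rfl, empty_subset _, by simp, by simp⟩
  · rcases subset_singleton_iff.1 (by simpa using hS) with rfl | rfl
    · exact ⟨∅, .empty, Subset.rfl, empty_subset _, by simp, by simp⟩
    · exact ⟨{1}, .singleton_one (by omega), Subset.rfl, by simp, by simp, fun _ => by simp⟩
  by_cases htop : m + 2 ∈ S
  swap
  · obtain ⟨T, hT, hST, hTm, hle, hlt⟩ := ih (m + 1) (by omega) (by omega) S fun x hx => by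
      have : x ≠ m + 2 := by rintro rfl; exact htop hx
      exact mem_Icc.2 (by grind)
    exact ⟨T, hT, hST, hTm.trans (Icc_subset_Icc_right (by omega)), hle, hlt⟩
  -- cover `m + 2` by the pair `{m + 1, m + 2}`, placed above a cover of the rest
  by_cases hnext : m + 1 ∈ S
  · obtain ⟨T, hT, hST, hTm, hle, -⟩ := ih m (by omega) (by omega) (S \ {m + 1, m + 2})
      fun x hx => by simp only [mem_sdiff, mem_insert, mem_singleton] at hx; grind
    obtain ⟨hT2, hTm2, hcard⟩ := hT.insert_insert_of_subset_Icc hTm (by omega)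
    have hpair : {m + 1, m + 2} ⊆ S := by simp [insert_subset_iff, hnext, htop]
    have hS' : #(S \ {m + 1, m + 2}) + 2 = #S := by
      have := card_le_card hpair
      rw [card_sdiff_of_subset hpair, card_pair (by omega)] at *
      omega
    refine ⟨_, hT2, fun x hx => ?_, hTm2, by omega, fun _ => by omega⟩
    simp only [mem_insert]
    by_contra! h
    exact h.2.2 (hST (by simp [hx, h.1, h.2.1]))
  · obtain ⟨T, hT, hST, hTm, hle, hlt⟩ := ih m (by omega) (by omega) (S.erase (m + 2))
      fun x hx => by
        have : x ≠ m + 1 := by rintro rfl; exact hnext (mem_of_mem_erase hx)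
        simp only [mem_erase] at hx; grind
    obtain ⟨hT2, hTm2, hcard⟩ := hT.insert_insert_of_subset_Icc hTm (by omega)
    have hS' : #(S.erase (m + 2)) + 1 = #S := card_erase_add_one htop
    refine ⟨_, hT2, fun x hx => ?_, hTm2, by omega, fun h => ?_⟩
    · simp only [mem_insert]
      by_contra! h
      exact h.2.2 (hST (mem_erase.2 ⟨h.2.1, hx⟩))
    · have := hlt (one_mem_or_exists_add_one_mem_erase h (by omega) hnext
        fun h3 => by simpa using hS h3)
      omega

/-- Between two consecutive non-elements of a Gale-even set the elements come in pairs
`{s - 1, s}`; the parity of `prefixCard T s` tells whether `s` is the upper or the lower end of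
its pair. -/
def galePartner (T : Finset ℕ) (δ s : ℕ) : ℕ :=
  if prefixCard T s % 2 = δ then s - 1 else s + 1

section galePartner

variable {n δ : ℕ} {S T : Finset ℕ}

theorem galePartner_mem (hδ : ∀ j ∈ Icc 1 n, j ∉ T → prefixCard T j % 2 = δ) {s : ℕ}
    (hs : s ∈ T) (hs2 : 2 ≤ s) (hsn : s + 1 ≤ n) : galePartner T δ s ∈ T := by
  unfold galePartner
  split_ifs with hc
  · by_contra h
    have hprev := hδ (s - 1) (mem_Icc.2 ⟨by omega, by omega⟩) h
    have hstep := prefixCard_add_one_of_mem (T := T) (x := s - 1)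
      (by rwa [Nat.sub_add_cancel (by omega)])
    rw [Nat.sub_add_cancel (by omega)] at hstep
    omega
  · by_contra h
    exact hc (prefixCard_add_one_of_notMem h ▸ hδ (s + 1) (mem_Icc.2 ⟨by omega, hsn⟩) h)

theorem galePartner_injOn (hδ : ∀ j ∈ Icc 1 n, j ∉ T → prefixCard T j % 2 = δ)
    (hS : ∀ s ∈ S, s ∈ T ∧ 2 ≤ s ∧ s + 1 ≤ n) : Set.InjOn (galePartner T δ) S := by
  -- an upper end `s` and a lower end `t` cannot share a partner: `s = t + 2` with `t + 1 ∈ T`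
  -- would give `prefixCard T s = prefixCard T t + 2`
  have cross : ∀ s ∈ S, ∀ t ∈ S, prefixCard T s % 2 = δ → prefixCard T t % 2 ≠ δ →
      s - 1 ≠ t + 1 := by
    intro s hs t ht hcs hct hst
    have ht1 : t + 1 ∈ T := by
      simpa [galePartner, hct] using galePartner_mem hδ (hS t ht).1 (hS t ht).2.1 (hS t ht).2.2
    have hs' : t + 1 + 1 ∈ T := by rw [show t + 1 + 1 = s by omega]; exact (hS s hs).1
    have := prefixCard_add_one_of_mem hs'
    rw [prefixCard_add_one_of_mem ht1, show t + 1 + 1 = s by omega] at this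
    omega
  intro s hs t ht hst
  have := (hS s hs).2.1
  have := (hS t ht).2.1
  unfold galePartner at hst
  split_ifs at hst with hcs hct hct
  · omega
  · exact (cross s hs t ht hcs hct hst).elim
  · exact (cross t ht s hs hct hcs hst.symm).elim
  · omega

end galePartner

theorem GaleEven.two_mul_card_le {n : ℕ} {S T : Finset ℕ} (hT : GaleEven n T) (hST : S ⊆ T)
    (h1 : 1 ∉ S) (hn : n ∉ S) (hS : ∀ i ∈ S, i + 1 ∉ S) : 2 * #S ≤ #T := by
  obtain ⟨δ, hδ⟩ := hT.exists_prefixCard_mod_two_eq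
  have hbounds : ∀ s ∈ S, s ∈ T ∧ 2 ≤ s ∧ s + 1 ≤ n := fun s hs => by
    have := mem_Icc.1 (hT.1 (hST hs))
    have : s ≠ 1 := by rintro rfl; exact h1 hs
    have : s ≠ n := by rintro rfl; exact hn hs
    exact ⟨hST hs, by omega, by omega⟩
  have hmaps : Set.MapsTo (galePartner T δ) S ((T \ S : Finset ℕ) : Set ℕ) := fun s hs => by
    obtain ⟨hsT, hs2, hsn⟩ := hbounds s hs
    refine mem_sdiff.2 ⟨galePartner_mem hδ hsT hs2 hsn, ?_⟩
    unfold galePartner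
    split_ifs
    · intro h
      exact hS _ h (by rwa [Nat.sub_add_cancel (by omega)])
    · exact hS s hs
  have := card_le_card_of_injOn _ hmaps (galePartner_injOn hδ hbounds)
  rw [card_sdiff_of_subset hST] at this
  omega

theorem stmt_8_general (d n : ℕ) (hn : 2 * d + 1 ≤ n) (S : Finset ℕ)
    (hS : S ⊆ Finset.Icc 1 n) (hcard : S.card = d + 1) :
    (∃ T : Finset ℕ, GaleEven n T ∧ T.card = 2 * d + 1 ∧ S ⊆ T) ↔
      (1 ∈ S ∨ n ∈ S ∨ ∃ i, i ∈ S ∧ i + 1 ∈ S) := by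
  constructor
  · rintro ⟨T, hT, hTcard, hST⟩
    by_contra! h
    have := hT.two_mul_card_le hST h.1 h.2.1 h.2.2
    omega
  · intro h
    suffices ∃ T₀, GaleEven n T₀ ∧ #T₀ ≤ 2 * d + 1 ∧ S ⊆ T₀ by
      obtain ⟨T₀, hT₀, hcard₀, hST₀⟩ := this
      obtain ⟨T, hT, hTcard, hT₀T⟩ := hT₀.exists_superset_card_eq hcard₀ hn
      exact ⟨T, hT, hTcard, hST₀.trans hT₀T⟩
    by_cases hnS : n ∈ S
    · obtain ⟨T, hT, hST, -, hTcard, -⟩ :=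
        exists_galeEven_superset (n := n) (n - 1) (by omega) (S.erase n) fun x hx => by
          have := mem_Icc.1 (hS (mem_of_mem_erase hx))
          exact mem_Icc.2 ⟨this.1, by have := ne_of_mem_erase hx; omega⟩
      refine ⟨insert n T, hT.insert_of_Ioc_subset (mem_Icc.2 ⟨by omega, le_rfl⟩) (by simp),
        ?_, subset_insert_iff.2 hST⟩
      have := card_insert_le n T
      rw [card_erase_of_mem hnS] at hTcard
      omega
    · obtain ⟨T, hT, hST, -, -, hlt⟩ := exists_galeEven_superset n le_rfl S hS
      have := hlt (by tauto)
      exact ⟨T, hT, by omega, hST⟩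

/-- A (d+1)-subset S of [n] is the vertex set of a d-face of the cyclic polytope
C_{2d+1}(n), i.e. is contained in a Gale-even (2d+1)-subset, iff 1 ∈ S, or
n ∈ S, or S contains two consecutive elements. -/
theorem stmt_8 (d n : ℕ) (hd : 1 ≤ d) (hn : 2 * d + 1 ≤ n) (S : Finset ℕ)
    (hS : S ⊆ Finset.Icc 1 n) (hcard : S.card = d + 1) :
    (∃ T : Finset ℕ, GaleEven n T ∧ T.card = 2 * d + 1 ∧ S ⊆ T) ↔
      (1 ∈ S ∨ n ∈ S ∨ ∃ i, i ∈ S ∧ i + 1 ∈ S) :=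
  stmt_8_general d n hn S hS hcard
end

section
/- Let d ≥ 1 and n ≥ 2d+3. Let K be the d-skeleton of the boundary complex of the cyclic polytope C_{2d+1}(n), i.e., the simplicial complex of all subsets S ⊆ [n] with |S| ≤ d+1 that are contained in some Gale-even (2d+1)-subset of [n], and let M be a missing d-face of C_{2d+1}(n), i.e., a (d+1)-element subset of [n] not contained in any Gale-even (2d+1)-subset. Then (Δ_{2d+2})^{≤d}, the d-skeleton of the (2d+2)-dimensional simplex, is a minor of K ∪ {M}. -/
open Classical in
/-- The d-skeleton of the boundary complex of the cyclic polytope C_{2d+1}(n):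
all subsets of [n] of cardinality at most d+1 contained in some Gale-even
(2d+1)-subset of [n]. -/
noncomputable def cycSkeleton (d n : ℕ) : Finset (Finset ℕ) :=
  (Finset.Icc 1 n).powerset.filter fun S =>
    S.card ≤ d + 1 ∧ ∃ T : Finset ℕ, GaleEven n T ∧ T.card = 2 * d + 1 ∧ S ⊆ T

/-- `M` is a missing face of `K`: `M ∉ K` but every proper subset of `M` is in `K`. -/
def MissingFace (K : Finset (Finset ℕ)) (M : Finset ℕ) : Prop :=
  M ∉ K ∧ ∀ F ⊂ M, F ∈ K

/-- The complex obtained from `K` by identifying the vertex `u` with `v`: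
{F ∈ K : u ∉ F} ∪ {(F ∖ {u}) ∪ {v} : F ∈ K, u ∈ F}. -/
def contractVerts (K : Finset (Finset ℕ)) (u v : ℕ) : Finset (Finset ℕ) :=
  K.filter (fun F => u ∉ F) ∪ (K.filter fun F => u ∈ F).image fun F => insert v (F.erase u)

/-- `L` is obtained from `K` by an admissible contraction: identification of two
distinct vertices u, v of K not both contained in any missing k-face of K with
k ≤ dim K (i.e. of cardinality at most dim K + 1 = sup of simplex cardinalities). -/
def AdmissibleContraction (K L : Finset (Finset ℕ)) : Prop :=
  ∃ u v : ℕ, u ≠ v ∧ {u} ∈ K ∧ {v} ∈ K ∧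
    (∀ M : Finset ℕ, M.card ≤ K.sup Finset.card → MissingFace K M → ¬(u ∈ M ∧ v ∈ M)) ∧
    L = contractVerts K u v

/-- `L` is obtained from `K` by a deletion, i.e. `L` is a subcomplex of `K`. -/
def Deletion (K L : Finset (Finset ℕ)) : Prop :=
  L ⊆ K ∧ ∀ F ∈ L, ∀ G ⊆ F, G ∈ L

/-- One minor step: a deletion or an admissible contraction. -/
def MinorStep (K L : Finset (Finset ℕ)) : Prop :=
  Deletion K L ∨ AdmissibleContraction K L


/-!
A set of at most `d + 1` vertices lies in a Gale-even `(2d+1)`-subset of `[n]` as soon as it has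
at most `d` elements or contains `1`, `n` or two consecutive integers: cover it by
`[1, t] ∪ {a₁, a₁+1} ∪ ⋯ ∪ {aᵣ, aᵣ+1} (∪ {n})` and adjust `t`. So `M` is a `(d+1)`-subset of
`[2, n-1]` without two consecutive elements.

Contract, in increasing order, every vertex `u < n` with `u, u + 1 ∉ M` onto `u + 1`. Each of
these contractions is admissible, since a set of at most `d + 1` vertices containing `u` and
`u + 1` is a face. The surviving vertices are `W = M ∪ (M - 1) ∪ {n}`, which has `2d + 3`
elements. A `(d+1)`-subset `S ≠ M` of `W` that is not a face contains exactly one of `m - 1`, `m`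
for each `m ∈ M`. Let `x` be the least element of `S ∖ M` and `p` the largest element of `M`
below `x` (or `0`). Then `p ∈ S ∪ {0}`, so replacing `x` by `p + 1` gives a face, and the
contractions slide `p + 1` onto `x`. Hence every such `S` appears in the contracted complex,
which is therefore the `d`-skeleton of the simplex on `W`.
-/

open Finset

def CycFace (d n : ℕ) (S : Finset ℕ) : Prop :=
  ∃ T : Finset ℕ, GaleEven n T ∧ T.card = 2 * d + 1 ∧ S ⊆ T

def pairUnion (Q : Finset ℕ) : Finset ℕ :=
  Q.biUnion fun a => {a, a + 1}

lemma mem_pairUnion {Q : Finset ℕ} {x : ℕ} : x ∈ pairUnion Q ↔ ∃ a ∈ Q, x = a ∨ x = a + 1 := by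
  simp [pairUnion]

lemma card_pairUnion_le (Q : Finset ℕ) : #(pairUnion Q) ≤ 2 * #Q := by
  calc #(pairUnion Q) ≤ ∑ a ∈ Q, #({a, a + 1} : Finset ℕ) := card_biUnion_le
    _ ≤ ∑ _a ∈ Q, 2 := sum_le_sum fun a _ => card_le_two
    _ = 2 * #Q := by rw [sum_const, smul_eq_mul, mul_comm]

lemma card_pairUnion_of_sep {Q : Finset ℕ} (hsep : ∀ a ∈ Q, a + 1 ∉ Q) :
    #(pairUnion Q) = 2 * #Q := by
  rw [pairUnion, card_biUnion]
  · simp [mul_comm]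
  · intro a ha b hb hab
    have : a + 1 ≠ b ∧ b + 1 ≠ a := ⟨fun h => hsep a ha (h ▸ hb), fun h => hsep b hb (h ▸ ha)⟩
    simp only [Function.onFun, disjoint_insert_left, disjoint_insert_right, disjoint_singleton,
      mem_insert, mem_singleton]
    omega

lemma galeEven_Icc_union_pairUnion (n t : ℕ) (Q suf : Finset ℕ) (hn : 1 ≤ n) (ht : t ≤ n)
    (hQ : ∀ a ∈ Q, 1 ≤ a ∧ a + 1 ≤ n) (hsep : ∀ a ∈ Q, a + 1 ∉ Q) (hsuf : suf ⊆ {n}) :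
    GaleEven n (Icc 1 t ∪ pairUnion Q ∪ suf) := by
  have hsuf' : ∀ x ∈ suf, x = n := fun x hx => mem_singleton.1 (hsuf hx)
  refine ⟨fun x hx => ?_, fun i hi j hj hiT hjT hij => ?_⟩
  · simp only [mem_union, mem_Icc, mem_pairUnion] at hx ⊢
    rcases hx with (hx | ⟨a, ha, hxa⟩) | hx
    · omega
    · have := hQ a ha; omega
    · have := hsuf' x hx; omega
  · -- between two non-members `i < j`, only whole pairs `{a, a + 1}` occur
    have key : (Icc 1 t ∪ pairUnion Q ∪ suf).filter (fun k => i < k ∧ k < j) =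
        pairUnion (Q.filter fun a => i < a ∧ a + 1 < j) := by
      ext k
      simp only [mem_filter, mem_union, mem_Icc, mem_pairUnion] at hi hj hiT hjT ⊢
      push Not at hiT hjT
      constructor
      · rintro ⟨(hk | ⟨a, ha, hka⟩) | hk, hik, hkj⟩
        · omega
        · have := hiT.1.2 a ha; have := hjT.1.2 a ha
          exact ⟨a, ⟨ha, by omega, by omega⟩, hka⟩
        · have := hsuf' k hk; omega
      · rintro ⟨a, ⟨ha, hia, haj⟩, hka⟩
        exact ⟨Or.inl (Or.inr ⟨a, ha, hka⟩), by omega, by omega⟩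
    rw [key, card_pairUnion_of_sep fun a ha h => hsep a (mem_filter.1 ha).1 (mem_filter.1 h).1]
    exact even_two_mul _

lemma exists_pairUnion_cover (S : Finset ℕ) :
    ∃ Q ⊆ S, (∀ a ∈ Q, a + 1 ∉ Q) ∧ S ⊆ pairUnion Q := by
  induction S using Finset.induction_on_max with
  | empty => exact ⟨∅, subset_refl _, by simp, by simp⟩
  | insert x S hlt ih =>
    obtain ⟨Q, hQS, hsep, hcov⟩ := ih
    by_cases hx : x ∈ pairUnion Q
    · exact ⟨Q, hQS.trans (subset_insert _ _), hsep, insert_subset hx hcov⟩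
    · refine ⟨insert x Q, insert_subset_insert _ hQS, ?_, ?_⟩
      · have hQlt : ∀ b ∈ Q, b < x := fun b hb => hlt b (hQS hb)
        intro a ha
        simp only [mem_pairUnion, not_exists, not_and, not_or] at hx
        simp only [mem_insert] at ha ⊢
        rcases ha with rfl | ha
        · rintro (h | h)
          · omega
          · have := hQlt _ h; omega
        · rintro (h | h)
          · exact (hx a ha).2 h.symm
          · exact hsep a ha h
      · rw [pairUnion, biUnion_insert, insert_union]
        exact insert_subset_insert _ (hcov.trans subset_union_right)

lemma Nat.exists_eq_of_map_add_one_le (f : ℕ → ℕ) (hf : ∀ t, f (t + 1) ≤ f t + 1) {a b v : ℕ}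
    (hab : a ≤ b) (ha : f a ≤ v) (hb : v ≤ f b) : ∃ t, a ≤ t ∧ t ≤ b ∧ f t = v := by
  induction b, hab using Nat.le_induction with
  | base => exact ⟨a, le_rfl, le_rfl, le_antisymm ha hb⟩
  | succ b hab ih =>
    by_cases hv : v ≤ f b
    · obtain ⟨t, h1, h2, h3⟩ := ih hv
      exact ⟨t, h1, by omega, h3⟩
    · exact ⟨b + 1, by omega, le_rfl, by have := hf b; omega⟩

lemma exists_galeEven_card_eq {n m t₀ : ℕ} {Q suf : Finset ℕ} (hn : 1 ≤ n) (hm : m ≤ n)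
    (hQ : ∀ a ∈ Q, 1 ≤ a ∧ a + 1 ≤ n) (hsep : ∀ a ∈ Q, a + 1 ∉ Q) (hsuf : suf ⊆ {n})
    (hcard : t₀ + 2 * #Q + #suf ≤ m) :
    ∃ t, t₀ ≤ t ∧ GaleEven n (Icc 1 t ∪ pairUnion Q ∪ suf) ∧
      #(Icc 1 t ∪ pairUnion Q ∪ suf) = m := by
  have hstep : ∀ t, #(Icc 1 (t + 1) ∪ pairUnion Q ∪ suf) ≤ #(Icc 1 t ∪ pairUnion Q ∪ suf) + 1 :=
    fun t => by
      rw [← Order.succ_eq_add_one, ← insert_Icc_right_eq_Icc_succ (by simp), insert_union,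
        insert_union]
      exact card_insert_le _ _
  have hlow : #(Icc 1 t₀ ∪ pairUnion Q ∪ suf) ≤ m := by
    have h₁ := card_union_le (Icc 1 t₀ ∪ pairUnion Q) suf
    have h₂ := card_union_le (Icc 1 t₀) (pairUnion Q)
    rw [Nat.card_Icc] at h₂
    have := card_pairUnion_le Q
    omega
  have hhigh : m ≤ #(Icc 1 n ∪ pairUnion Q ∪ suf) := by
    have := card_le_card (subset_union_left.trans subset_union_left :
      Icc 1 n ⊆ Icc 1 n ∪ pairUnion Q ∪ suf)
    rw [Nat.card_Icc] at this
    omega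
  obtain ⟨t, ht₀, htn, ht⟩ := Nat.exists_eq_of_map_add_one_le
    (fun t => #(Icc 1 t ∪ pairUnion Q ∪ suf)) hstep (by omega) hlow hhigh
  exact ⟨t, ht₀, galeEven_Icc_union_pairUnion n t Q suf hn htn hQ hsep hsuf, ht⟩

lemma card_inter_one_add_two_mul_card_add_le {d n : ℕ} {S Q : Finset ℕ} (hn : 2 ≤ n)
    (hS : S ⊆ Icc 1 n) (hc : #S ≤ d + 1) (hQS : Q ⊆ S \ {1, n}) (hsep : ∀ a ∈ Q, a + 1 ∉ Q)
    (hcase : #S ≤ d ∨ 1 ∈ S ∨ n ∈ S ∨ ∃ k ∈ S, k + 1 ∈ S) :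
    #(S ∩ {1}) + 2 * #Q + #(S ∩ {n}) ≤ 2 * d + 1 := by
  have hsplit : #(S \ {1, n}) + #(S ∩ {1}) + #(S ∩ {n}) = #S := by
    have hdisj : Disjoint (S ∩ {1}) (S ∩ {n}) :=
      disjoint_of_subset_left inter_subset_right
        (disjoint_of_subset_right inter_subset_right (disjoint_singleton.2 (by omega)))
    rw [add_assoc, ← card_union_of_disjoint hdisj, ← inter_union_distrib_left, ← insert_eq,
      card_sdiff_add_card_inter]
  have hone : #(S ∩ {1}) ≤ 1 := (card_le_card inter_subset_right).trans (card_singleton 1).le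
  have hlast : #(S ∩ {n}) ≤ 1 := (card_le_card inter_subset_right).trans (card_singleton n).le
  have hQcard : #Q ≤ #(S \ {1, n}) := card_le_card hQS
  rcases hcase with h | h | h | ⟨k, hk, hk1⟩
  · omega
  · rw [inter_singleton_of_mem h, card_singleton] at hsplit ⊢; omega
  · rw [inter_singleton_of_mem h, card_singleton] at hsplit ⊢; omega
  · by_cases hk1n : k = 1 ∨ k + 1 = n
    · rcases hk1n with rfl | rfl
      · rw [inter_singleton_of_mem hk, card_singleton] at hsplit ⊢; omega
      · rw [inter_singleton_of_mem hk1, card_singleton] at hsplit ⊢; omega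
    · -- `k` and `k + 1` cannot both be starts of pairs
      have hlt : #Q < #(S \ {1, n}) := by
        have := mem_Icc.1 (hS hk)
        have := mem_Icc.1 (hS hk1)
        refine card_lt_card ⟨hQS, fun h => hsep k (h ?_) (h ?_)⟩ <;>
          simp only [mem_sdiff, mem_insert, mem_singleton, not_or]
        · exact ⟨hk, by omega, by omega⟩
        · exact ⟨hk1, by omega, by omega⟩
      omega

lemma cycFace_of_cases {d n : ℕ} (hn : 2 * d + 3 ≤ n) {S : Finset ℕ} (hS : S ⊆ Icc 1 n)
    (hc : #S ≤ d + 1) (hcase : #S ≤ d ∨ 1 ∈ S ∨ n ∈ S ∨ ∃ k ∈ S, k + 1 ∈ S) :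
    CycFace d n S := by
  obtain ⟨Q, hQS, hsep, hcov⟩ := exists_pairUnion_cover (S \ {1, n})
  have hQ : ∀ q ∈ Q, 1 ≤ q ∧ q + 1 ≤ n := fun q hq => by
    have hq := hQS hq
    simp only [mem_sdiff, mem_insert, mem_singleton, not_or] at hq
    have := mem_Icc.1 (hS hq.1)
    omega
  obtain ⟨t, ht, hT, hTcard⟩ := exists_galeEven_card_eq (by omega) (by omega) hQ hsep
    inter_subset_right (card_inter_one_add_two_mul_card_add_le (by omega) hS hc hQS hsep hcase)
  refine ⟨_, hT, hTcard, fun x hx => ?_⟩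
  simp only [mem_union, mem_Icc, mem_inter, mem_singleton]
  by_cases hx1 : x = 1
  · subst hx1
    rw [inter_singleton_of_mem hx, card_singleton] at ht
    exact Or.inl (Or.inl ⟨le_rfl, ht⟩)
  by_cases hxn : x = n
  · exact Or.inr ⟨hx, hxn⟩
  · exact Or.inl (Or.inr (hcov (by simp [hx, hx1, hxn])))

section CycFace

variable {d n : ℕ} (hn : 2 * d + 3 ≤ n) {S : Finset ℕ} (hS : S ⊆ Icc 1 n)
include hn hS

lemma cycFace_of_card_le (hc : #S ≤ d) : CycFace d n S :=
  cycFace_of_cases hn hS (by omega) (Or.inl hc)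

lemma cycFace_of_one_mem (hc : #S ≤ d + 1) (h1 : 1 ∈ S) : CycFace d n S :=
  cycFace_of_cases hn hS hc (Or.inr (Or.inl h1))

lemma cycFace_of_last_mem (hc : #S ≤ d + 1) (hn' : n ∈ S) : CycFace d n S :=
  cycFace_of_cases hn hS hc (Or.inr (Or.inr (Or.inl hn')))

lemma cycFace_of_succ_mem (hc : #S ≤ d + 1) {k : ℕ} (hk : k ∈ S) (hk1 : k + 1 ∈ S) :
    CycFace d n S :=
  cycFace_of_cases hn hS hc (Or.inr (Or.inr (Or.inr ⟨k, hk, hk1⟩)))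

lemma sparse_of_not_cycFace (hc : #S ≤ d + 1) (h : ¬ CycFace d n S) :
    #S = d + 1 ∧ 1 ∉ S ∧ n ∉ S ∧ ∀ k ∈ S, k + 1 ∉ S := by
  refine ⟨?_, fun h1 => h (cycFace_of_one_mem hn hS hc h1),
    fun hn' => h (cycFace_of_last_mem hn hS hc hn'),
    fun k hk hk1 => h (cycFace_of_succ_mem hn hS hc hk hk1)⟩
  by_contra hne
  exact h (cycFace_of_card_le hn hS (by omega))

end CycFace

lemma mem_cycSkeleton {d n : ℕ} {S : Finset ℕ} :
    S ∈ cycSkeleton d n ↔ S ⊆ Icc 1 n ∧ #S ≤ d + 1 ∧ CycFace d n S := by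
  simp [cycSkeleton, CycFace]

lemma image_ite_mem_contractVerts {K : Finset (Finset ℕ)} {F : Finset ℕ} (hF : F ∈ K) (u v : ℕ) :
    F.image (fun x => if x = u then v else x) ∈ contractVerts K u v := by
  by_cases hu : u ∈ F
  · refine mem_union_right _ (mem_image.2 ⟨F, mem_filter.2 ⟨hF, hu⟩, ?_⟩)
    ext y
    simp only [mem_insert, mem_erase, mem_image]
    constructor
    · rintro (rfl | ⟨hyu, hy⟩)
      · exact ⟨u, hu, if_pos rfl⟩
      · exact ⟨y, hy, if_neg hyu⟩
    · rintro ⟨x, hx, rfl⟩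
      by_cases hxu : x = u
      · exact Or.inl (if_pos hxu)
      · rw [if_neg hxu]
        exact Or.inr ⟨hxu, hx⟩
  · have : F.image (fun x => if x = u then v else x) = F := by
      conv_rhs => rw [← image_id (s := F)]
      exact image_congr fun x hx => if_neg (by rintro rfl; exact hu hx)
    rw [this]
    exact mem_union_left _ (mem_filter.2 ⟨hF, hu⟩)

lemma admissibleContraction_of_forall_mem {K : Finset (Finset ℕ)} {u v : ℕ} (huv : u ≠ v)
    (hu : {u} ∈ K) (hv : {v} ∈ K)
    (h : ∀ N : Finset ℕ, u ∈ N → v ∈ N → #N ≤ K.sup card → (∀ w ∈ N, {w} ∈ K) → N ∈ K) :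
    AdmissibleContraction K (contractVerts K u v) := by
  refine ⟨u, v, huv, hu, hv, fun N hN ⟨hNK, hsub⟩ ⟨huN, hvN⟩ => hNK ?_, rfl⟩
  refine h N huN hvN hN fun w hw => hsub _ ((singleton_subset_iff.2 hw).ssubset_of_ne ?_)
  rintro rfl
  exact huv ((mem_singleton.1 huN).trans (mem_singleton.1 hvN).symm)

def contractSeq (l : List ℕ) (K : Finset (Finset ℕ)) : Finset (Finset ℕ) :=
  l.foldl (fun K u => contractVerts K u (u + 1)) K

def contractSeqVert (l : List ℕ) (x : ℕ) : ℕ :=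
  l.foldl (fun y u => if y = u then u + 1 else y) x

lemma image_contractSeqVert_mem_contractSeq :
    ∀ (l : List ℕ) {K : Finset (Finset ℕ)} {F : Finset ℕ}, F ∈ K →
      F.image (contractSeqVert l) ∈ contractSeq l K
  | [], _, F, hF => by
    show F.image (fun x => x) ∈ _
    rwa [image_id']
  | u :: l, _, _, hF => by
    have := image_contractSeqVert_mem_contractSeq l (image_ite_mem_contractVerts hF u (u + 1))
    rwa [image_image] at this

lemma contractSeqVert_eq_of_forall_mem {l : List ℕ} (hl : l.Pairwise (· < ·)) {a b : ℕ}
    (hab : a ≤ b) (hmem : ∀ y, a ≤ y → y < b → y ∈ l) (hb : b ∉ l) : contractSeqVert l a = b := by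
  induction l generalizing a with
  | nil =>
    simp only [List.not_mem_nil, imp_false, not_lt] at hmem
    exact le_antisymm hab (hmem a le_rfl)
  | cons u l ih =>
    obtain ⟨hu, htail⟩ := List.pairwise_cons.1 hl
    simp only [List.mem_cons, not_or] at hmem hb
    show contractSeqVert l (if a = u then u + 1 else a) = b
    split_ifs with hau
    · subst hau
      exact ih htail (by omega) (fun y h1 h2 => (hmem y (by omega) h2).resolve_left (by omega))
        hb.2
    · refine ih htail hab (fun y h1 h2 => (hmem y h1 h2).resolve_left ?_) hb.2
      rintro rfl
      have := hu a ((hmem a le_rfl (by omega)).resolve_left hau)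
      omega

def Sandwiched (d n : ℕ) (V : Finset ℕ) (K : Finset (Finset ℕ)) : Prop :=
  (∀ S ∈ K, S ⊆ V ∧ #S ≤ d + 1) ∧ ∀ S ⊆ V, #S ≤ d + 1 → CycFace d n S → S ∈ K

lemma sandwiched_insert_cycSkeleton {d n : ℕ} {M : Finset ℕ} (hM : M ⊆ Icc 1 n)
    (hMcard : #M = d + 1) :
    Sandwiched d n (Icc 1 n) (insert M (cycSkeleton d n)) := by
  refine ⟨fun S hS => ?_, fun S hSV hS hface =>
    mem_insert_of_mem (mem_cycSkeleton.2 ⟨hSV, hS, hface⟩)⟩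
  rcases mem_insert.1 hS with rfl | hS
  · exact ⟨hM, hMcard.le⟩
  · exact ⟨(mem_cycSkeleton.1 hS).1, (mem_cycSkeleton.1 hS).2.1⟩

section Sandwiched

variable {d n : ℕ} {V : Finset ℕ} {K : Finset (Finset ℕ)} {u : ℕ}

lemma Sandwiched.admissibleContraction (hd : 1 ≤ d) (hn : 2 * d + 3 ≤ n) (hV : V ⊆ Icc 1 n)
    (hK : Sandwiched d n V K) (hu : u ∈ V) (hu1 : u + 1 ∈ V) :
    AdmissibleContraction K (contractVerts K u (u + 1)) := by
  have hvert : ∀ w ∈ V, {w} ∈ K := fun w hw =>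
    hK.2 _ (singleton_subset_iff.2 hw) (by simp) <|
      cycFace_of_card_le hn (singleton_subset_iff.2 (hV hw)) (by simpa)
  refine admissibleContraction_of_forall_mem (by omega) (hvert u hu) (hvert _ hu1)
    fun N huN hu1N hN hsing => ?_
  have hNV : N ⊆ V := fun w hw => singleton_subset_iff.1 (hK.1 _ (hsing w hw)).1
  have hN' : #N ≤ d + 1 := hN.trans (Finset.sup_le fun S hS => (hK.1 S hS).2)
  exact hK.2 N hNV hN' (cycFace_of_succ_mem hn (hNV.trans hV) hN' huN hu1N)

lemma Sandwiched.erase_contractVerts (hK : Sandwiched d n V K) (hu1 : u + 1 ∈ V) :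
    Sandwiched d n (V.erase u) (contractVerts K u (u + 1)) := by
  refine ⟨fun S hS => ?_, fun S hSV hS hface => ?_⟩
  · rcases mem_union.1 hS with hS | hS
    · obtain ⟨hSK, huS⟩ := mem_filter.1 hS
      exact ⟨fun x hx => mem_erase.2 ⟨fun h => huS (h ▸ hx), (hK.1 S hSK).1 hx⟩, (hK.1 S hSK).2⟩
    · obtain ⟨F, hF, rfl⟩ := mem_image.1 hS
      obtain ⟨hFK, huF⟩ := mem_filter.1 hF
      refine ⟨insert_subset (mem_erase.2 ⟨by omega, hu1⟩) (erase_subset_erase u (hK.1 F hFK).1), ?_⟩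
      have := card_erase_of_mem huF
      have := card_insert_le (u + 1) (F.erase u)
      have := (hK.1 F hFK).2
      omega
  · refine mem_union_left _ (mem_filter.2 ⟨hK.2 S (hSV.trans (erase_subset u V)) hS hface, ?_⟩)
    exact fun h => (mem_erase.1 (hSV h)).1 rfl

lemma Sandwiched.reflTransGen_contractSeq (hd : 1 ≤ d) (hn : 2 * d + 3 ≤ n) :
    ∀ {l : List ℕ} {V : Finset ℕ} {K : Finset (Finset ℕ)}, Sandwiched d n V K → V ⊆ Icc 1 n →
      l.Pairwise (· < ·) → (∀ u ∈ l, u ∈ V ∧ u + 1 ∈ V) →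
      Relation.ReflTransGen MinorStep K (contractSeq l K) ∧
        Sandwiched d n (V \ l.toFinset) (contractSeq l K)
  | [], _, _, hK, _, _, _ => ⟨.refl, by simpa [contractSeq] using hK⟩
  | u :: l, V, K, hK, hV, hl, hlV => by
    obtain ⟨hu, hl⟩ := List.pairwise_cons.1 hl
    have hlV' : ∀ w ∈ l, w ∈ V.erase u ∧ w + 1 ∈ V.erase u := fun w hw => by
      have := hu w hw
      have := hlV w (List.mem_cons_of_mem u hw)
      exact ⟨mem_erase.2 ⟨by omega, this.1⟩, mem_erase.2 ⟨by omega, this.2⟩⟩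
    have hu' := hlV u List.mem_cons_self
    obtain ⟨hmin, hK'⟩ := (hK.erase_contractVerts hu'.2).reflTransGen_contractSeq hd hn
      ((erase_subset u V).trans hV) hl hlV'
    refine ⟨.head (Or.inr (hK.admissibleContraction hd hn hV hu'.1 hu'.2)) hmin, ?_⟩
    rwa [List.toFinset_cons, sdiff_insert, ← erase_sdiff_comm]

end Sandwiched

lemma exists_gap_below_of_card_le {M S : Finset ℕ} (h0 : 0 ∉ S) (hcard : #M ≤ #S) (hne : S ≠ M)
    (hS : ∀ x ∈ S, x ∈ M ∨ x + 1 ∈ M) (hsep : ∀ x ∈ S, x + 1 ∉ S) :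
    ∃ x ∈ S, x ∉ M ∧ ∃ p < x, (p = 0 ∨ p ∈ S) ∧ ∀ y, p < y → y < x → y ∉ M := by
  classical
  have hsurj : ∀ m ∈ M, m ∈ S ∨ ∃ z ∈ S, z ∉ M ∧ z + 1 = m := by
    have hmaps : Set.MapsTo (fun x => if x ∈ M then x else x + 1) S M := fun x hx => by
      by_cases hxM : x ∈ M
      · simp [hxM]
      · simpa [hxM] using (hS x hx).resolve_left hxM
    have hinj : Set.InjOn (fun x => if x ∈ M then x else x + 1) S := fun a ha b hb hab => by
      have := hsep a ha; have := hsep b hb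
      by_cases haM : a ∈ M <;> by_cases hbM : b ∈ M <;>
        simp only [haM, hbM, if_true, if_false] at hab
      · exact hab
      · exact absurd (hab ▸ ha) (hsep b hb)
      · exact absurd (hab ▸ hb) (hsep a ha)
      · omega
    intro m hm
    obtain ⟨z, hz, hzm⟩ := surjOn_of_injOn_of_card_le _ hmaps hinj hcard hm
    by_cases hzM : z ∈ M
    · simp only [hzM, if_true] at hzm
      exact Or.inl (hzm ▸ hz)
    · simp only [hzM, if_false] at hzm
      exact Or.inr ⟨z, hz, hzM, hzm⟩
  have hSM : (S \ M).Nonempty :=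
    sdiff_nonempty.2 fun hsub => hne (eq_of_subset_of_card_le hsub hcard)
  obtain ⟨hxS, hxM⟩ := mem_sdiff.1 ((S \ M).min'_mem hSM)
  set x := (S \ M).min' hSM
  have hx0 : x ≠ 0 := fun h => h0 (h ▸ hxS)
  have hp := (insert 0 (M.filter (· < x))).max'_mem (insert_nonempty _ _)
  set p := (insert 0 (M.filter (· < x))).max' (insert_nonempty _ _)
  simp only [mem_insert, mem_filter] at hp
  refine ⟨x, hxS, hxM, p, by omega, ?_, fun y hpy hyx hyM => ?_⟩
  · refine hp.imp_right fun ⟨hpM, hpx⟩ => (hsurj p hpM).resolve_right ?_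
    rintro ⟨z, hzS, hzM, hzp⟩
    have := (S \ M).min'_le z (mem_sdiff.2 ⟨hzS, hzM⟩)
    omega
  · have := (insert 0 (M.filter (· < x))).le_max' y (by simp [hyM, hyx])
    omega

def minorVerts (n : ℕ) (M : Finset ℕ) : Finset ℕ :=
  insert n (M ∪ M.image (· - 1))

def contractList (n : ℕ) (M : Finset ℕ) : List ℕ :=
  (Icc 1 n \ minorVerts n M).sort

lemma contractList_pairwise {n : ℕ} {M : Finset ℕ} : (contractList n M).Pairwise (· < ·) :=
  (sortedLT_sort _).pairwise

lemma not_mem_contractList {n x : ℕ} {M : Finset ℕ} (hx : x ∈ minorVerts n M) : x ∉ contractList n M := by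
  rw [contractList, mem_sort, mem_sdiff]
  exact fun h => h.2 hx

lemma image_contractSeqVert_eq_self {n : ℕ} {M A : Finset ℕ} (hA : A ⊆ minorVerts n M) :
    A.image (contractSeqVert (contractList n M)) = A := by
  conv_rhs => rw [← image_id (s := A)]
  exact image_congr fun x hx => contractSeqVert_eq_of_forall_mem contractList_pairwise le_rfl
    (fun y h1 h2 => absurd h2 (not_lt.2 h1)) (not_mem_contractList (hA hx))

section MissingFace

variable {n : ℕ} {M : Finset ℕ} (hM : M ⊆ Icc 1 n)
include hM

lemma minorVerts_subset (hn : 1 ≤ n) (hM1 : 1 ∉ M) : minorVerts n M ⊆ Icc 1 n := by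
  intro x hx
  simp only [minorVerts, mem_insert, mem_union, mem_image] at hx
  rcases hx with rfl | hx | ⟨m, hm, rfl⟩
  · exact mem_Icc.2 ⟨hn, le_rfl⟩
  · exact hM hx
  · have := mem_Icc.1 (hM hm)
    have : m ≠ 1 := fun h => hM1 (h ▸ hm)
    exact mem_Icc.2 ⟨by omega, by omega⟩

lemma card_minorVerts (hMn : n ∉ M) (hMsep : ∀ k ∈ M, k + 1 ∉ M) :
    #(minorVerts n M) = 2 * #M + 1 := by
  have hpos : ∀ m ∈ M, 1 ≤ m := fun m hm => (mem_Icc.1 (hM hm)).1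
  have himage : #(M.image (· - 1)) = #M :=
    card_image_of_injOn fun a ha b hb hab => by
      have := hpos a ha; have := hpos b hb; omega
  have hdisj : Disjoint M (M.image (· - 1)) := disjoint_left.2 fun x hx hx' => by
    obtain ⟨m, hm, rfl⟩ := mem_image.1 hx'
    have := hpos m hm
    exact hMsep _ hx (by rwa [Nat.sub_add_cancel this])
  have hn : n ∉ M ∪ M.image (· - 1) := by
    simp only [mem_union, mem_image, not_or, not_exists, not_and]
    refine ⟨hMn, fun m hm h => ?_⟩
    have := mem_Icc.1 (hM hm)
    omega
  rw [minorVerts, card_insert_of_notMem hn, card_union_of_disjoint hdisj, himage]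
  ring

lemma mem_sdiff_minorVerts {x : ℕ} :
    x ∈ Icc 1 n \ minorVerts n M ↔ 1 ≤ x ∧ x < n ∧ x ∉ M ∧ x + 1 ∉ M := by
  simp only [minorVerts, mem_sdiff, mem_Icc, mem_insert, mem_union, mem_image, not_or,
    not_exists, not_and]
  constructor
  · rintro ⟨⟨h1, hn⟩, hxn, hxM, himg⟩
    exact ⟨h1, by omega, hxM, fun h => himg _ h (by omega)⟩
  · rintro ⟨h1, hn, hxM, hx1M⟩
    refine ⟨⟨h1, hn.le⟩, by omega, hxM, fun m hm hmx => ?_⟩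
    have := (mem_Icc.1 (hM hm)).1
    exact hx1M (by rwa [show x + 1 = m by omega])

lemma mem_contractList {x : ℕ} :
    x ∈ contractList n M ↔ 1 ≤ x ∧ x < n ∧ x ∉ M ∧ x + 1 ∉ M := by
  rw [contractList, mem_sort, mem_sdiff_minorVerts hM]

lemma sdiff_toFinset_contractList (hn : 1 ≤ n) (hM1 : 1 ∉ M) :
    Icc 1 n \ (contractList n M).toFinset = minorVerts n M := by
  rw [contractList, sort_toFinset, Finset.sdiff_sdiff_eq_self (minorVerts_subset hM hn hM1)]

lemma contractSeqVert_contractList_of_gap {p x : ℕ} (hpx : p < x) (hxn : x ≤ n)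
    (hxW : x ∈ minorVerts n M) (hxM : x ∉ M) (hgap : ∀ y, p < y → y < x → y ∉ M) :
    contractSeqVert (contractList n M) (p + 1) = x := by
  refine contractSeqVert_eq_of_forall_mem contractList_pairwise hpx (fun y h1 h2 => ?_)
    (not_mem_contractList hxW)
  rw [mem_contractList hM]
  refine ⟨by omega, by omega, hgap y (by omega) h2, fun h => ?_⟩
  rcases Nat.lt_or_ge (y + 1) x with h3 | h3
  · exact hgap (y + 1) (by omega) h3 h
  · exact hxM (by rwa [show y + 1 = x by omega] at h)

lemma mem_or_succ_mem_of_mem_minorVerts (hM1 : 1 ∉ M) {x : ℕ} (hx : x ∈ minorVerts n M)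
    (hxn : x ≠ n) : x ∈ M ∨ x + 1 ∈ M := by
  simp only [minorVerts, mem_insert, mem_union, mem_image] at hx
  rcases hx with rfl | hxM | ⟨m, hm, rfl⟩
  · exact absurd rfl hxn
  · exact Or.inl hxM
  · have : m ≠ 1 := fun h => hM1 (h ▸ hm)
    have := (mem_Icc.1 (hM hm)).1
    exact Or.inr (by rwa [Nat.sub_add_cancel (by omega)])

end MissingFace

lemma exists_mem_cycSkeleton_image_eq {d n : ℕ} (hn : 2 * d + 3 ≤ n) {M : Finset ℕ}
    (hM : M ⊆ Icc 1 n) (hM1 : 1 ∉ M) (hMcard : #M = d + 1) {S : Finset ℕ}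
    (hSW : S ⊆ minorVerts n M) (hS : #S ≤ d + 1) (hface : ¬ CycFace d n S) (hSM : S ≠ M) :
    ∃ F ∈ cycSkeleton d n, F.image (contractSeqVert (contractList n M)) = S := by
  have hSI : S ⊆ Icc 1 n := hSW.trans (minorVerts_subset hM (by omega) hM1)
  obtain ⟨hcard, -, hnS, hsep⟩ := sparse_of_not_cycFace hn hSI hS hface
  obtain ⟨x, hxS, hxM, p, hpx, hp, hgap⟩ := exists_gap_below_of_card_le
    (fun h => by simpa using hSI h) (by omega) hSM
    (fun x hx => mem_or_succ_mem_of_mem_minorVerts hM hM1 (hSW hx) fun h => hnS (h ▸ hx)) hsep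
  have hx := mem_Icc.1 (hSI hxS)
  have hFI : insert (p + 1) (S.erase x) ⊆ Icc 1 n :=
    insert_subset (mem_Icc.2 ⟨by omega, by omega⟩) ((erase_subset x S).trans hSI)
  have hFcard : #(insert (p + 1) (S.erase x)) ≤ d + 1 := by
    have := card_insert_le (p + 1) (S.erase x)
    have := card_erase_of_mem hxS
    omega
  have hFface : CycFace d n (insert (p + 1) (S.erase x)) := by
    rcases hp with rfl | hpS
    · exact cycFace_of_one_mem hn hFI hFcard (mem_insert_self _ _)
    · exact cycFace_of_succ_mem hn hFI hFcard
        (mem_insert_of_mem (mem_erase.2 ⟨hpx.ne, hpS⟩)) (mem_insert_self _ _)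
  refine ⟨_, mem_cycSkeleton.2 ⟨hFI, hFcard, hFface⟩, ?_⟩
  rw [image_insert, contractSeqVert_contractList_of_gap hM hpx hx.2 (hSW hxS) hxM hgap,
    image_contractSeqVert_eq_self ((erase_subset x S).trans hSW), insert_erase hxS]

/-- For d ≥ 1, n ≥ 2d+3 and any missing d-face M of C_{2d+1}(n), the d-skeleton
(Δ_{2d+2})^{≤d} of the (2d+2)-simplex is a minor (in the sense of Nevo, up to
isomorphism) of the complex (∂C_{2d+1}(n))^{≤d} ∪ {M}. -/
theorem stmt_9 (d n : ℕ) (hd : 1 ≤ d) (hn : 2 * d + 3 ≤ n) (M : Finset ℕ)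
    (hM : M ⊆ Finset.Icc 1 n) (hMcard : M.card = d + 1)
    (hMmiss : ¬ ∃ T : Finset ℕ, GaleEven n T ∧ T.card = 2 * d + 1 ∧ M ⊆ T) :
    ∃ (L : Finset (Finset ℕ)) (W : Finset ℕ),
      Relation.ReflTransGen MinorStep (insert M (cycSkeleton d n)) L ∧
      W.card = 2 * d + 3 ∧
      L = W.powerset.filter fun F => F.card ≤ d + 1 := by
  obtain ⟨-, hM1, hMn, hMsep⟩ := sparse_of_not_cycFace hn hM hMcard.le hMmiss
  obtain ⟨hminor, hend⟩ := (sandwiched_insert_cycSkeleton hM hMcard).reflTransGen_contractSeq hd hn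
    subset_rfl contractList_pairwise fun u hu => by
      obtain ⟨h1, h2, -⟩ := (mem_contractList hM).1 hu
      exact ⟨mem_Icc.2 ⟨h1, h2.le⟩, mem_Icc.2 ⟨by omega, h2⟩⟩
  rw [sdiff_toFinset_contractList hM (by omega) hM1] at hend
  refine ⟨_, minorVerts n M, hminor, by rw [card_minorVerts hM hMn hMsep, hMcard]; ring, ?_⟩
  ext S
  rw [mem_filter, mem_powerset]
  refine ⟨hend.1 S, fun ⟨hSW, hS⟩ => ?_⟩
  by_cases hface : CycFace d n S
  · exact hend.2 S hSW hS hface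
  by_cases hSM : S = M
  · rw [← image_contractSeqVert_eq_self hSW, hSM]
    exact image_contractSeqVert_mem_contractSeq _ (mem_insert_self _ _)
  obtain ⟨F, hF, rfl⟩ := exists_mem_cycSkeleton_image_eq hn hM hM1 hMcard hSW hS hface hSM
  exact image_contractSeqVert_mem_contractSeq _ (mem_insert_of_mem hF)
end

section
/- If a simplicial complex K of dimension d is nice on [n], then d+2 ≤ n ≤ 2d+3. -/
/-!
A complex nice on `[n]` cannot contain `[n]` itself, since the complement `∅` is a
simplex; so a top simplex of size `d + 1` is a proper subset of `[n]`. Conversely, a subset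
of `[n]` of size `d + 2` is too large to be a simplex, so its complement of size `n - (d + 2)`
is one, and hence has at most `d + 1` elements.
-/

open Finset

def IsNiceOn {α : Type*} [DecidableEq α] (K : Finset (Finset α)) (V : Finset α) : Prop :=
  ∀ F ⊆ V, (F ∈ K ↔ V \ F ∉ K)

namespace IsNiceOn

variable {α : Type*} [DecidableEq α] {K : Finset (Finset α)} {V : Finset α}

theorem notMem_self (hK : IsNiceOn K V) (hempty : ∅ ∈ K) : V ∉ K := by
  simpa using (hK ∅ V.empty_subset).mp hempty

theorem card_lt_of_mem (hK : IsNiceOn K V) (hdown : ∀ F ∈ K, ∀ G ⊆ F, G ∈ K)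
    {F : Finset α} (hF : F ∈ K) (hFV : F ⊆ V) : #F < #V := by
  have hVK : V ∉ K := hK.notMem_self (hdown F hF ∅ F.empty_subset)
  exact card_lt_card (ssubset_of_subset_of_ne hFV fun hFeq => hVK (hFeq ▸ hF))

theorem card_le_two_mul_add_one (hK : IsNiceOn K V) {m : ℕ} (hdim : ∀ F ∈ K, #F ≤ m) :
    #V ≤ 2 * m + 1 := by
  by_contra! hV
  obtain ⟨A, hAV, hA⟩ := exists_subset_card_eq (show m + 1 ≤ #V by omega)
  have hAK : A ∉ K := fun hAK => by have := hdim A hAK; omega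
  have hcompl : V \ A ∈ K := not_not.mp (mt (hK A hAV).mpr hAK)
  have := hdim _ hcompl
  rw [card_sdiff_of_subset hAV] at this
  omega

end IsNiceOn

theorem stmt_11_general (n d : ℕ) (K : Finset (Finset ℕ))
    (hdown : ∀ F ∈ K, ∀ G ⊆ F, G ∈ K)
    (hvert : ∀ F ∈ K, F ⊆ Finset.Icc 1 n)
    (hnice : ∀ F ⊆ Finset.Icc 1 n, (F ∈ K ↔ Finset.Icc 1 n \ F ∉ K))
    (hdim : ∀ F ∈ K, F.card ≤ d + 1)
    (hdim' : ∃ F ∈ K, F.card = d + 1) :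
    d + 2 ≤ n ∧ n ≤ 2 * d + 3 := by
  have hK : IsNiceOn K (Icc 1 n) := hnice
  obtain ⟨F, hF, hFcard⟩ := hdim'
  have hlower := hK.card_lt_of_mem hdown hF (hvert F hF)
  have hupper := hK.card_le_two_mul_add_one hdim
  simp only [Nat.card_Icc, add_tsub_cancel_right] at hlower hupper
  omega

/-- If a simplicial complex of dimension d is nice on [n] (for every F ⊆ [n],
exactly one of F and [n] ∖ F is a simplex), then d + 2 ≤ n ≤ 2d + 3. -/
theorem stmt_11 (n d : ℕ) (K : Finset (Finset ℕ))
    (hne : K.Nonempty)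
    (hdown : ∀ F ∈ K, ∀ G ⊆ F, G ∈ K)
    (hvert : ∀ F ∈ K, F ⊆ Finset.Icc 1 n)
    (hnice : ∀ F ⊆ Finset.Icc 1 n, (F ∈ K ↔ Finset.Icc 1 n \ F ∉ K))
    (hdim : ∀ F ∈ K, F.card ≤ d + 1)
    (hdim' : ∃ F ∈ K, F.card = d + 1) :
    d + 2 ≤ n ∧ n ≤ 2 * d + 3 :=
  stmt_11_general n d K hdown hvert hnice hdim hdim'
end

section
/- Let k ≥ 2 and let 𝓕 be a finite family of k-uniform hypergraphs, and let n_0 ≥ k and m_0 > 1 be integers with n_0 < k·m_0 such that every F ∈ 𝓕 has at most n_0 vertices and at least m_0 edges. Then there exist a constant C > 0 (depending only on k and 𝓕) and N ∈ ℕ such that for every n ≥ N there exists an 𝓕-free k-graph on n vertices with at least C·n^{k − (n_0 − k)/(m_0 − 1)} edges; in particular ex(n,𝓕) = Ω(n^{k − (n_0−k)/(m_0−1)}). -/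
/-- A k-uniform hypergraph: a finite vertex set (of natural numbers) together
with a collection of k-element subsets of it, the edges. -/
structure HyperGraph (k : ℕ) where
  verts : Finset ℕ
  edges : Finset (Finset ℕ)
  edges_sub : ∀ e ∈ edges, e ⊆ verts
  uniform : ∀ e ∈ edges, e.card = k

/-- `H` contains a copy of `F`: an injective map of the vertex set of `F` into
that of `H` sending every edge of `F` to an edge of `H`. -/
def ContainsCopy {k : ℕ} (H F : HyperGraph k) : Prop :=
  ∃ φ : ℕ → ℕ, Set.InjOn φ F.verts ∧ (∀ v ∈ F.verts, φ v ∈ H.verts) ∧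
    ∀ e ∈ F.edges, e.image φ ∈ H.edges

/-- `H` is 𝓕-free: it contains no copy of any member of 𝓕. -/
def FreeOf {k : ℕ} (F : Set (HyperGraph k)) (H : HyperGraph k) : Prop :=
  ∀ G ∈ F, ¬ ContainsCopy H G

/-- ex(n, 𝓕): the maximum number of edges of an 𝓕-free k-graph on n vertices. -/
noncomputable def exNum (k n : ℕ) (F : Set (HyperGraph k)) : ℕ :=
  sSup {m : ℕ | ∃ H : HyperGraph k, H.verts.card = n ∧ FreeOf F H ∧ H.edges.card = m}

/-!
The deletion method, derandomised by averaging. Let `N = C(n, k)` and `m ≈ c n^β`. A copy of a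
member of `𝓕` in the complete `k`-graph on `n` vertices has at least `m₀` edges, so it lies in at
most a `(m / N)^m₀` fraction of the `m`-edge sets, and there are at most `|𝓕| n^n₀` such copies.
Since `n₀ + β (m₀ - 1) = k m₀`, for `c` small some `m`-edge set contains at most `m / 2` copies;
deleting one edge from each of them leaves an `𝓕`-free `k`-graph with at least `m / 2` edges.
-/

open Finset Filter

section Deletion
variable {α : Type*} [DecidableEq α]

lemma exists_hittingSet_card_le {𝒯 : Finset (Finset α)} (h𝒯 : ∀ T ∈ 𝒯, T.Nonempty) :
    ∃ D : Finset α, #D ≤ #𝒯 ∧ ∀ T ∈ 𝒯, ¬Disjoint T D := by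
  induction 𝒯 using Finset.induction_on with
  | empty => exact ⟨∅, by simp, by simp⟩
  | insert T 𝒯 hT ih =>
    obtain ⟨D, hD, hit⟩ := ih fun T' hT' => h𝒯 T' (mem_insert_of_mem hT')
    obtain ⟨x, hx⟩ := h𝒯 T (mem_insert_self T 𝒯)
    refine ⟨insert x D, ?_, ?_⟩
    · rw [card_insert_of_notMem hT]
      exact (card_insert_le x D).trans (by omega)
    · rw [forall_mem_insert]
      exact ⟨not_disjoint_iff.mpr ⟨x, hx, mem_insert_self x D⟩,
        fun T' hT' hdisj => hit T' hT' (hdisj.mono_right (subset_insert x D))⟩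

lemma card_filter_powersetCard_superset_le (E T : Finset α) {m t : ℕ} (htT : t ≤ #T)
    (htm : t ≤ m) : #{S ∈ E.powersetCard m | T ⊆ S} ≤ (#E - t).choose (m - t) := by
  obtain ⟨T', hT'T, rfl⟩ := exists_subset_card_eq htT
  calc #{S ∈ E.powersetCard m | T ⊆ S} ≤ #{S ∈ E.powersetCard m | T' ⊆ S} :=
        card_le_card (monotone_filter_right _ fun _ _ hS => hT'T.trans hS)
    _ ≤ (#E - #T').choose (m - #T') := by
        by_cases hT'E : T' ⊆ E
        · rw [card_filter_powersetCard_subset T' E m hT'E htm]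
        · rw [filter_false_of_mem fun S hS hT'S => hT'E (hT'S.trans (mem_powersetCard.mp hS).1)]
          exact Nat.zero_le _

lemma exists_mem_powersetCard_card_filter_subset_le (E : Finset α) (𝒯 : Finset (Finset α))
    {m t : ℕ} (htm : t ≤ m) (hm : m ≤ #E) (h𝒯 : ∀ T ∈ 𝒯, t ≤ #T) :
    ∃ S ∈ E.powersetCard m,
      #{T ∈ 𝒯 | T ⊆ S} * (#E).choose m ≤ #𝒯 * (#E - t).choose (m - t) := by
  have hsum : ∑ S ∈ E.powersetCard m, #{T ∈ 𝒯 | T ⊆ S} ≤ #𝒯 * (#E - t).choose (m - t) := by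
    have := sum_card_bipartiteAbove_eq_sum_card_bipartiteBelow (s := E.powersetCard m) (t := 𝒯)
      (r := fun S T => T ⊆ S)
    simp only [bipartiteAbove, bipartiteBelow] at this
    rw [this]
    exact sum_le_card_nsmul _ _ _ fun T hT =>
      card_filter_powersetCard_superset_le E T (h𝒯 T hT) htm
  refine exists_le_of_sum_le (powersetCard_nonempty.mpr hm) ?_
  rw [← sum_mul, sum_const, card_powersetCard, smul_eq_mul, mul_comm _ (#𝒯 * _)]
  exact Nat.mul_le_mul_right _ hsum

/-- The deletion method: pick an `m`-subset of `E` containing at most `m / 2` members of `𝒯`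
(possible by averaging), then delete one element from each of them. -/
lemma exists_subset_forall_not_subset (E : Finset α) (𝒯 : Finset (Finset α)) {m t : ℕ}
    (ht : 0 < t) (htm : t ≤ m) (hm : m ≤ #E) (h𝒯 : ∀ T ∈ 𝒯, t ≤ #T)
    (hfew : 2 * #𝒯 * (#E - t).choose (m - t) ≤ m * (#E).choose m) :
    ∃ S ⊆ E, m ≤ 2 * #S ∧ ∀ T ∈ 𝒯, ¬T ⊆ S := by
  obtain ⟨S₀, hS₀, hcount⟩ := exists_mem_powersetCard_card_filter_subset_le E 𝒯 htm hm h𝒯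
  obtain ⟨hS₀E, hS₀m⟩ := mem_powersetCard.mp hS₀
  have hbad : 2 * #{T ∈ 𝒯 | T ⊆ S₀} ≤ m := by
    refine Nat.le_of_mul_le_mul_right ?_ (Nat.choose_pos hm)
    calc 2 * #{T ∈ 𝒯 | T ⊆ S₀} * (#E).choose m ≤ 2 * (#𝒯 * (#E - t).choose (m - t)) := by
          rw [mul_assoc]; exact Nat.mul_le_mul_left 2 hcount
      _ ≤ m * (#E).choose m := by rw [← mul_assoc]; exact hfew
  obtain ⟨D, hD, hit⟩ := exists_hittingSet_card_le (𝒯 := {T ∈ 𝒯 | T ⊆ S₀}) fun T hT =>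
    card_pos.mp (ht.trans_le (h𝒯 T (mem_filter.mp hT).1))
  refine ⟨S₀ \ D, sdiff_subset.trans hS₀E, ?_, fun T hT hTS => ?_⟩
  · have := card_le_card_sdiff_add_card (s := S₀) (t := D)
    omega
  · exact hit T (mem_filter.mpr ⟨hT, hTS.trans sdiff_subset⟩)
      (disjoint_of_subset_left hTS sdiff_disjoint)

end Deletion

/-- Removing `t` forced elements shrinks the number of `m`-subsets of an `N`-set by a factor of
at least `(m / N) ^ t`. -/
lemma Nat.choose_sub_mul_pow_le_choose_mul_pow {N m : ℕ} (hmN : m ≤ N) :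
    ∀ {t}, t ≤ m → (N - t).choose (m - t) * N ^ t ≤ N.choose m * m ^ t
  | 0, _ => by simp
  | t + 1, ht => by
    have ih := choose_sub_mul_pow_le_choose_mul_pow hmN (t := t) (by omega)
    obtain ⟨a, ha⟩ : ∃ a, N - t = a + 1 := ⟨N - t - 1, by omega⟩
    obtain ⟨b, hb⟩ : ∃ b, m - t = b + 1 := ⟨m - t - 1, by omega⟩
    rw [ha, hb] at ih
    rw [show N - (t + 1) = a by omega, show m - (t + 1) = b by omega]
    -- `(b + 1) / (a + 1) = (m - t) / (N - t) ≤ m / N`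
    have hratio : (b + 1) * N ≤ m * (a + 1) := by
      rw [← ha, ← hb, Nat.sub_mul, Nat.mul_sub, mul_comm m t]
      exact Nat.sub_le_sub_left (Nat.mul_le_mul_left t hmN) _
    refine Nat.le_of_mul_le_mul_left ?_ a.succ_pos
    calc (a + 1) * (a.choose b * N ^ (t + 1))
        = (a + 1).choose (b + 1) * N ^ t * ((b + 1) * N) := by
          rw [← mul_assoc, Nat.add_one_mul_choose_eq]; ring
      _ ≤ N.choose m * m ^ t * (m * (a + 1)) := Nat.mul_le_mul ih hratio
      _ = (a + 1) * (N.choose m * m ^ (t + 1)) := by ring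

lemma Nat.pow_le_two_pow_mul_factorial_mul_choose {n k : ℕ} (h : 2 * k ≤ n) :
    (n : ℝ) ^ k ≤ 2 ^ k * k.factorial * n.choose k := by
  have hhalf : (n : ℝ) / 2 ≤ ((n + 1 - k : ℕ) : ℝ) := by
    rw [Nat.cast_sub (by omega)]
    push_cast
    linarith [show (2 * k : ℝ) ≤ n by exact_mod_cast h]
  have hchoose := Nat.pow_le_choose (α := ℝ) k n
  rw [div_le_iff₀ (by positivity)] at hchoose
  calc (n : ℝ) ^ k = 2 ^ k * (n / 2) ^ k := by rw [div_pow]; field_simp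
    _ ≤ 2 ^ k * ((n + 1 - k : ℕ) : ℝ) ^ k := by gcongr
    _ ≤ 2 ^ k * k.factorial * n.choose k := by rw [mul_assoc, mul_comm (k.factorial : ℝ)]; gcongr

lemma exists_deletion_constant (a : ℕ) {D : ℝ} (hD : 1 ≤ D) {m0 : ℕ} (hm0 : 0 < m0) :
    ∃ c : ℝ, 0 < c ∧ 2 * c * D ≤ 1 ∧ 4 * a * c * D ^ m0 ≤ 1 := by
  have hDpow : D ≤ D ^ m0 := le_self_pow₀ hD hm0.ne'
  refine ⟨1 / (4 * (a + 1) * D ^ m0), by positivity, ?_, ?_⟩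
  · rw [mul_comm, ← mul_assoc, mul_one_div, div_le_one (by positivity)]
    nlinarith [(a.cast_nonneg : (0 : ℝ) ≤ a)]
  · rw [mul_assoc, mul_comm (1 / _), ← mul_assoc, mul_one_div, div_le_one (by positivity)]
    nlinarith

noncomputable def deletionExponent (k n0 m0 : ℕ) : ℝ :=
  (k : ℝ) - ((n0 : ℝ) - k) / ((m0 : ℝ) - 1)

section DeletionExponent
variable {k n0 m0 : ℕ}

lemma deletionExponent_pos (hm0 : 1 < m0) (hkm : n0 < k * m0) : 0 < deletionExponent k n0 m0 := by
  have hm0' : (0 : ℝ) < m0 - 1 := by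
    rw [sub_pos]; exact_mod_cast hm0
  have hkm' : (n0 : ℝ) < k * m0 := by exact_mod_cast hkm
  rw [deletionExponent, sub_pos, div_lt_iff₀ hm0']
  linarith

lemma deletionExponent_le (hn0 : k ≤ n0) (hm0 : 1 < m0) : deletionExponent k n0 m0 ≤ k := by
  have hm0' : (0 : ℝ) ≤ m0 - 1 := by
    rw [sub_nonneg]; exact_mod_cast hm0.le
  have hn0' : (0 : ℝ) ≤ n0 - k := by
    rw [sub_nonneg]; exact_mod_cast hn0
  exact sub_le_self _ (div_nonneg hn0' hm0')

/-- The identity defining `β`: if `m = n ^ β` of the `N ≈ n ^ k` edges are kept, the expected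
number `n ^ n0 * (m / N) ^ m0` of copies of a member of the family is about `m`. -/
lemma pow_mul_rpow_deletionExponent_pow {x : ℝ} (hx : 0 < x) (hm0 : 1 < m0) :
    x ^ n0 * (x ^ deletionExponent k n0 m0) ^ (m0 - 1) = (x ^ k) ^ m0 := by
  have hm0' : (m0 : ℝ) - 1 ≠ 0 := by
    rw [sub_ne_zero]; exact_mod_cast hm0.ne'
  rw [← Real.rpow_natCast (x ^ _), ← Real.rpow_mul hx.le, ← Real.rpow_natCast x n0,
    ← Real.rpow_add hx, ← pow_mul, ← Real.rpow_natCast x (k * m0), Nat.cast_sub hm0.le]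
  congr 1
  rw [deletionExponent]
  push_cast
  field_simp
  ring

lemma eventually_deletion_bounds (a : ℕ) (hn0 : k ≤ n0) (hm0 : 1 < m0) (hkm : n0 < k * m0) :
    ∃ c : ℝ, 0 < c ∧ ∀ᶠ n : ℕ in atTop,
      m0 ≤ ⌈c * (n : ℝ) ^ deletionExponent k n0 m0⌉₊ ∧
      ⌈c * (n : ℝ) ^ deletionExponent k n0 m0⌉₊ ≤ n.choose k ∧
      2 * a * n ^ n0 * ⌈c * (n : ℝ) ^ deletionExponent k n0 m0⌉₊ ^ (m0 - 1) ≤ n.choose k ^ m0 := by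
  set β := deletionExponent k n0 m0
  set D : ℝ := 2 ^ k * k.factorial
  have hD : 1 ≤ D := one_le_mul_of_one_le_of_one_le (one_le_pow₀ one_le_two)
    (by exact_mod_cast k.factorial_pos)
  obtain ⟨c, hc, hcD, hacD⟩ := exists_deletion_constant a hD (by omega : 0 < m0)
  refine ⟨c, hc, ?_⟩
  have htendsto : Tendsto (fun n : ℕ => c * (n : ℝ) ^ β) atTop atTop :=
    ((tendsto_rpow_atTop (deletionExponent_pos hm0 hkm)).comp
      tendsto_natCast_atTop_atTop).const_mul_atTop hc
  filter_upwards [htendsto.eventually_ge_atTop (m0 : ℝ), eventually_ge_atTop (2 * k),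
    eventually_gt_atTop 0] with n hm0x hkn hn
  set x := c * (n : ℝ) ^ β
  set m := ⌈x⌉₊
  set N := n.choose k
  have hn' : (0 : ℝ) < n := by exact_mod_cast hn
  have hx1 : 1 ≤ x := le_trans (by exact_mod_cast hm0.le) hm0x
  have hmx : (m : ℝ) ≤ 2 * x := (Nat.ceil_lt_add_one (by linarith)).le.trans (by linarith)
  have hnN : (n : ℝ) ^ k ≤ D * N := Nat.pow_le_two_pow_mul_factorial_mul_choose hkn
  have hβk : (n : ℝ) ^ β ≤ (n : ℝ) ^ k := by
    rw [← Real.rpow_natCast]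
    exact Real.rpow_le_rpow_of_exponent_le (by exact_mod_cast hn) (deletionExponent_le hn0 hm0)
  refine ⟨by exact_mod_cast hm0x.trans (Nat.le_ceil x), ?_, ?_⟩
  · suffices (m : ℝ) ≤ N by exact_mod_cast this
    calc (m : ℝ) ≤ 2 * c * (n : ℝ) ^ β := by linarith
      _ ≤ 2 * c * (D * N) := by gcongr; exact hβk.trans hnN
      _ ≤ N := by nlinarith
  · suffices (2 * a * n ^ n0 * m ^ (m0 - 1) : ℝ) ≤ N ^ m0 by exact_mod_cast this
    have h2c : 2 * c ≤ 1 := le_trans (le_mul_of_one_le_right (by positivity) hD) hcD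
    calc (2 * a * n ^ n0 * m ^ (m0 - 1) : ℝ) ≤ 2 * a * n ^ n0 * (2 * x) ^ (m0 - 1) := by
          gcongr
      _ = 2 * a * (2 * c) ^ (m0 - 1) * (n ^ n0 * ((n : ℝ) ^ β) ^ (m0 - 1)) := by ring
      _ = 2 * a * (2 * c) ^ (m0 - 1) * ((n : ℝ) ^ k) ^ m0 := by
          rw [pow_mul_rpow_deletionExponent_pow hn' hm0]
      _ ≤ 2 * a * (2 * c) * (D * N) ^ m0 := by
          gcongr
          exact pow_le_of_le_one (by positivity) h2c (by omega)
      _ = 4 * a * c * D ^ m0 * N ^ m0 := by ring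
      _ ≤ N ^ m0 := mul_le_of_le_one_left (by positivity) hacD

end DeletionExponent

namespace HyperGraph

variable {k : ℕ}

def edgeImage (G : HyperGraph k) (φ : ℕ → ℕ) : Finset (Finset ℕ) :=
  G.edges.image (Finset.image φ)

lemma edgeImage_congr {G : HyperGraph k} {φ ψ : ℕ → ℕ} (h : Set.EqOn φ ψ G.verts) :
    G.edgeImage φ = G.edgeImage ψ :=
  image_congr fun e he => image_congr fun _ hv => h (G.edges_sub e he hv)

lemma card_edgeImage {G : HyperGraph k} {φ : ℕ → ℕ} (hφ : Set.InjOn φ G.verts) :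
    #(G.edgeImage φ) = #G.edges :=
  card_image_of_injOn fun _ he _ he' =>
    image_injOn_powerset_of_injOn hφ (mem_powerset.mpr (G.edges_sub _ he))
      (mem_powerset.mpr (G.edges_sub _ he'))

lemma card_edges_le_choose (H : HyperGraph k) : #H.edges ≤ (#H.verts).choose k := by
  rw [← card_powersetCard]
  exact card_le_card fun e he => mem_powersetCard.mpr ⟨H.edges_sub e he, H.uniform e he⟩

/-- The map `ℕ → ℕ` extending an embedding `s ↪ t`, with junk value `0` off `s`. -/
def extendEmbedding {s t : Finset ℕ} (ψ : s ↪ t) (v : ℕ) : ℕ :=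
  if h : v ∈ s then ψ ⟨v, h⟩ else 0

lemma extendEmbedding_injOn {s t : Finset ℕ} (ψ : s ↪ t) :
    Set.InjOn (extendEmbedding ψ) s := fun u hu v hv huv => by
  simp only [extendEmbedding, dif_pos (mem_coe.mp hu), dif_pos (mem_coe.mp hv)] at huv
  exact congrArg Subtype.val (ψ.injective (Subtype.ext huv))

/-- The edge sets of the copies of `G` in the complete `k`-graph on `V`. -/
noncomputable def copyEdgeSets (G : HyperGraph k) (V : Finset ℕ) : Finset (Finset (Finset ℕ)) :=
  (univ : Finset (G.verts ↪ V)).image fun ψ => G.edgeImage (extendEmbedding ψ)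

lemma card_copyEdgeSets_le (G : HyperGraph k) (V : Finset ℕ) :
    #(G.copyEdgeSets V) ≤ #V ^ #G.verts :=
  calc #(G.copyEdgeSets V) ≤ Fintype.card (G.verts ↪ V) := card_image_le
    _ = (#V).descFactorial #G.verts := by simp [Fintype.card_embedding_eq]
    _ ≤ #V ^ #G.verts := Nat.descFactorial_le_pow _ _

lemma card_of_mem_copyEdgeSets {G : HyperGraph k} {V : Finset ℕ} {T : Finset (Finset ℕ)}
    (hT : T ∈ G.copyEdgeSets V) : #T = #G.edges := by
  obtain ⟨ψ, -, rfl⟩ := mem_image.mp hT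
  exact card_edgeImage (extendEmbedding_injOn ψ)

lemma edgeImage_mem_copyEdgeSets {G : HyperGraph k} {V : Finset ℕ} {φ : ℕ → ℕ}
    (hφ : Set.InjOn φ G.verts) (hV : ∀ v ∈ G.verts, φ v ∈ V) :
    G.edgeImage φ ∈ G.copyEdgeSets V := by
  let ψ : G.verts ↪ V :=
    ⟨fun v => ⟨φ v, hV v v.2⟩, fun u v huv => Subtype.ext (hφ u.2 v.2 (congrArg Subtype.val huv))⟩
  refine mem_image.mpr ⟨ψ, mem_univ ψ, edgeImage_congr fun v hv => ?_⟩
  simp only [extendEmbedding, dif_pos (mem_coe.mp hv)]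
  rfl

lemma freeOf_of_forall_not_subset {F : Set (HyperGraph k)} {H : HyperGraph k}
    (h : ∀ G ∈ F, ∀ T ∈ G.copyEdgeSets H.verts, ¬T ⊆ H.edges) : FreeOf F H :=
  fun G hG ⟨_, hφ, hV, hedges⟩ =>
    h G hG _ (edgeImage_mem_copyEdgeSets hφ hV) (image_subset_iff.mpr hedges)

lemma card_edges_le_exNum {F : Set (HyperGraph k)} {H : HyperGraph k} (hfree : FreeOf F H) :
    #H.edges ≤ exNum k #H.verts F := by
  refine le_csSup ⟨(#H.verts).choose k, ?_⟩ ⟨H, rfl, hfree, rfl⟩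
  rintro _ ⟨H', hV, -, rfl⟩
  exact hV ▸ H'.card_edges_le_choose

lemma exists_freeOf_le_two_mul_card_edges (F : Finset (HyperGraph k))
    {n0 m0 n m : ℕ} (hn : 0 < n) (hm0 : 0 < m0)
    (hbound : ∀ G ∈ F, #G.verts ≤ n0 ∧ m0 ≤ #G.edges) (hm0m : m0 ≤ m) (hmN : m ≤ n.choose k)
    (hnum : 2 * #F * n ^ n0 * m ^ (m0 - 1) ≤ n.choose k ^ m0) :
    ∃ H : HyperGraph k, #H.verts = n ∧ FreeOf ↑F H ∧ m ≤ 2 * #H.edges := by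
  set E := (range n).powersetCard k
  have hE : #E = n.choose k := by rw [card_powersetCard, card_range]
  set 𝒯 := F.biUnion (·.copyEdgeSets (range n))
  have h𝒯 : ∀ T ∈ 𝒯, m0 ≤ #T := fun T hT => by
    obtain ⟨G, hG, hT⟩ := mem_biUnion.mp hT
    exact (card_of_mem_copyEdgeSets hT).symm ▸ (hbound G hG).2
  have h𝒯card : #𝒯 ≤ #F * n ^ n0 := by
    refine card_biUnion_le.trans (sum_le_card_nsmul _ _ _ fun G hG => ?_)
    calc #(G.copyEdgeSets (range n)) ≤ n ^ #G.verts := by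
          simpa using G.card_copyEdgeSets_le (range n)
      _ ≤ n ^ n0 := Nat.pow_le_pow_right hn (hbound G hG).1
  have hfew : 2 * #𝒯 * (#E - m0).choose (m - m0) ≤ m * (#E).choose m := by
    rw [hE]
    set N := n.choose k
    refine Nat.le_of_mul_le_mul_right ?_ (pow_pos (hm0.trans_le (hm0m.trans hmN)) m0)
    calc 2 * #𝒯 * (N - m0).choose (m - m0) * N ^ m0
        ≤ 2 * (#F * n ^ n0) * ((N - m0).choose (m - m0) * N ^ m0) := by
          rw [mul_assoc]; gcongr
      _ ≤ 2 * (#F * n ^ n0) * (N.choose m * m ^ m0) := by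
          exact Nat.mul_le_mul_left _ (Nat.choose_sub_mul_pow_le_choose_mul_pow hmN hm0m)
      _ = m * N.choose m * (2 * #F * n ^ n0 * m ^ (m0 - 1)) := by
          obtain ⟨j, rfl⟩ : ∃ j, m0 = j + 1 := ⟨m0 - 1, by omega⟩
          rw [Nat.add_sub_cancel]; ring
      _ ≤ m * N.choose m * N ^ m0 := Nat.mul_le_mul_left _ hnum
  obtain ⟨S, hSE, hmS, hS⟩ := exists_subset_forall_not_subset E 𝒯 hm0 hm0m (hE ▸ hmN) h𝒯 hfew
  refine ⟨⟨range n, S, fun e he => (mem_powersetCard.mp (hSE he)).1,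
    fun e he => (mem_powersetCard.mp (hSE he)).2⟩, card_range n, ?_, hmS⟩
  exact freeOf_of_forall_not_subset fun G hG T hT => hS T (mem_biUnion.mpr ⟨G, hG, hT⟩)

end HyperGraph

theorem stmt_17_general (k : ℕ) (F : Set (HyperGraph k)) (hfin : F.Finite)
    (n0 m0 : ℕ) (hn0 : k ≤ n0) (hm0 : 1 < m0) (hkm : n0 < k * m0)
    (hbound : ∀ G ∈ F, G.verts.card ≤ n0 ∧ m0 ≤ G.edges.card) :
    ∃ C : ℝ, 0 < C ∧ ∃ N : ℕ, ∀ n : ℕ, N ≤ n →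
      (∃ H : HyperGraph k, H.verts.card = n ∧ FreeOf F H ∧
        C * (n : ℝ) ^ ((k : ℝ) - ((n0 : ℝ) - k) / ((m0 : ℝ) - 1)) ≤ (H.edges.card : ℝ)) ∧
      C * (n : ℝ) ^ ((k : ℝ) - ((n0 : ℝ) - k) / ((m0 : ℝ) - 1)) ≤ (exNum k n F : ℝ) := by
  obtain ⟨c, hc, hbounds⟩ := eventually_deletion_bounds #hfin.toFinset hn0 hm0 hkm
  obtain ⟨N, hN⟩ := eventually_atTop.mp (hbounds.and (eventually_gt_atTop 0))
  refine ⟨c / 2, half_pos hc, N, fun n hn => ?_⟩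
  obtain ⟨⟨hm0m, hmN, hfew⟩, hn⟩ := hN n hn
  obtain ⟨H, rfl, hfree, hmH⟩ := HyperGraph.exists_freeOf_le_two_mul_card_edges hfin.toFinset hn
    (by omega) (by simpa using hbound) hm0m hmN hfew
  rw [hfin.coe_toFinset] at hfree
  have hlow : c / 2 * (#H.verts : ℝ) ^ deletionExponent k n0 m0 ≤ #H.edges := by
    have hceil := Nat.le_ceil (c * (#H.verts : ℝ) ^ deletionExponent k n0 m0)
    have hedges : (⌈c * (#H.verts : ℝ) ^ deletionExponent k n0 m0⌉₊ : ℝ) ≤ 2 * #H.edges := by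
      exact_mod_cast hmH
    linarith
  exact ⟨⟨H, rfl, hfree, hlow⟩, hlow.trans (by exact_mod_cast H.card_edges_le_exNum hfree)⟩

/-- Probabilistic lower bound for Turán numbers: if every member of the finite
family 𝓕 of k-graphs has at most n₀ vertices and at least m₀ > 1 edges, with
k ≤ n₀ < k·m₀, then for some C > 0 and all large n there is an 𝓕-free k-graph
on n vertices with at least C·n^{k − (n₀−k)/(m₀−1)} edges; in particular
ex(n,𝓕) ≥ C·n^{k − (n₀−k)/(m₀−1)}. -/
theorem stmt_17 (k : ℕ) (hk : 2 ≤ k) (F : Set (HyperGraph k)) (hfin : F.Finite)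
    (n0 m0 : ℕ) (hn0 : k ≤ n0) (hm0 : 1 < m0) (hkm : n0 < k * m0)
    (hbound : ∀ G ∈ F, G.verts.card ≤ n0 ∧ m0 ≤ G.edges.card) :
    ∃ C : ℝ, 0 < C ∧ ∃ N : ℕ, ∀ n : ℕ, N ≤ n →
      (∃ H : HyperGraph k, H.verts.card = n ∧ FreeOf F H ∧
        C * (n : ℝ) ^ ((k : ℝ) - ((n0 : ℝ) - k) / ((m0 : ℝ) - 1)) ≤ (H.edges.card : ℝ)) ∧
      C * (n : ℝ) ^ ((k : ℝ) - ((n0 : ℝ) - k) / ((m0 : ℝ) - 1)) ≤ (exNum k n F : ℝ) :=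
  stmt_17_general k F hfin n0 m0 hn0 hm0 hkm hbound
end
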